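/- arXiv:2311.04359 — 6 statements merged into one kernel-verified Lean document; each statement's English description precedes it below -/
import Mathlib

section
/- Let (X, A, Y) be random elements on a probability space where A takes values in {0,1} and Y is integrable, and let Y^1, Y^0 be integrable random variables (potential outcomes) satisfying: (i) consistency, Y = A·Y^1 + (1−A)·Y^0; (ii) positivity, 0 < π(X) < 1 almost surely, where π(X) is a version of P(A=1 | X); and (iii) ignorability, (Y^1, Y^0) is conditionally independent of A given X. Then the average treatment effect is identified: E[Y^1 − Y^0] = E[ μ_1(X) − μ_0(X) ], where μ_a(X) is a version of E[Y | A=a, X] (i.e., a version of the conditional expectation of Y given X computed under the law restricted to {A=a}). -/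
open MeasureTheory ProbabilityTheory

/-- Integral pull-out: for `m`-strongly-measurable `f`, `∫ f·g = ∫ f·E[g|m]`. -/
lemma integral_mul_eq_integral_mul_condexp {Ω : Type*} {m mΩ : MeasurableSpace Ω}
    (hm : m ≤ mΩ) (μ : Measure Ω) [IsFiniteMeasure μ] {f g : Ω → ℝ}
    (hf : StronglyMeasurable[m] f) (hfg : Integrable (f * g) μ) (hg : Integrable g μ) :
    ∫ ω, f ω * g ω ∂μ = ∫ ω, f ω * (μ[g|m]) ω ∂μ := by
  have h := condExp_mul_of_stronglyMeasurable_left (μ := μ) hf hfg hg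
  calc ∫ ω, f ω * g ω ∂μ = ∫ ω, (f * g) ω ∂μ := rfl
    _ = ∫ ω, (μ[f * g|m]) ω ∂μ := (integral_condExp hm).symm
    _ = ∫ ω, f ω * (μ[g|m]) ω ∂μ := integral_congr_ae h

/-- Set-integral pull-out over `m`-measurable sets. -/
lemma setIntegral_mul_eq_setIntegral_mul_condexp {Ω : Type*} {m mΩ : MeasurableSpace Ω}
    (hm : m ≤ mΩ) (μ : Measure Ω) [IsFiniteMeasure μ] {f g : Ω → ℝ}
    (hf : StronglyMeasurable[m] f) (hfg : Integrable (fun ω => f ω * g ω) μ)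
    (hg : Integrable g μ) {S : Set Ω} (hS : MeasurableSet[m] S) :
    ∫ x in S, f x * g x ∂μ = ∫ x in S, f x * (μ[g|m]) x ∂μ := by
  have hSm : MeasurableSet S := hm S hS
  have hind : StronglyMeasurable[m] (S.indicator f) := hf.indicator hS
  have heq1 : ∀ x, S.indicator f x * g x = S.indicator (fun y => f y * g y) x := by
    intro x; rw [Set.indicator_mul_left]
  have heq2 : ∀ x, S.indicator f x * (μ[g|m]) x
      = S.indicator (fun y => f y * (μ[g|m]) y) x := by
    intro x; rw [Set.indicator_mul_left]
  have h1 : Integrable (S.indicator f * g) μ := by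
    refine (hfg.indicator hSm).congr (Filter.Eventually.of_forall fun x => ?_)
    simp only [Pi.mul_apply, heq1 x]
  have key := integral_mul_eq_integral_mul_condexp hm μ hind h1 hg
  calc ∫ x in S, f x * g x ∂μ = ∫ x, S.indicator (fun y => f y * g y) x ∂μ := by
        rw [integral_indicator hSm]
    _ = ∫ x, S.indicator f x * g x ∂μ := by simp_rw [heq1]
    _ = ∫ x, S.indicator f x * (μ[g|m]) x ∂μ := key
    _ = ∫ x, S.indicator (fun y => f y * (μ[g|m]) y) x ∂μ := by simp_rw [heq2]
    _ = ∫ x in S, f x * (μ[g|m]) x ∂μ := integral_indicator hSm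

lemma integral_indicator_mul_left' {Ω : Type*} {mΩ : MeasurableSpace Ω} (μ : Measure Ω)
    {S : Set Ω} (hS : MeasurableSet S) (f g : Ω → ℝ) :
    ∫ x, S.indicator f x * g x ∂μ = ∫ x in S, f x * g x ∂μ := by
  rw [← integral_indicator hS]
  congr 1; ext x; rw [Set.indicator_mul_left]

lemma mul_indicator_one_eq_indicator {Ω : Type*} (B : Set Ω) (f : Ω → ℝ) (x : Ω) :
    f x * B.indicator 1 x = B.indicator f x := by
  by_cases hx : x ∈ B <;> simp [Set.indicator_apply, hx]

/-- Generic single-arm identification. -/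
lemma arm_identification {Ω : Type*} {m F mΩ : MeasurableSpace Ω}
    (hm : m ≤ mΩ) (hmF : m ≤ F) (hF : F ≤ mΩ)
    (μ : Measure Ω) [IsProbabilityMeasure μ]
    (Y Ya p μaX : Ω → ℝ) (B : Set Ω) (hB : MeasurableSet B)
    (hYaF : StronglyMeasurable[F] Ya) (hYaint : Integrable Ya μ)
    (hYint : Integrable Y μ)
    (hpm : StronglyMeasurable[m] p) (hpbd : ∀ᵐ ω ∂μ, |p ω| ≤ 1) (hpne : ∀ᵐ ω ∂μ, p ω ≠ 0)
    (hμaXm : StronglyMeasurable[m] μaX) (hμaXint : Integrable μaX μ)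
    (hYeq : ∀ ω ∈ B, Y ω = Ya ω)
    (hK : ∀ g : Ω → ℝ, StronglyMeasurable[F] g → Integrable g μ →
        ∫ ω, g ω * B.indicator 1 ω ∂μ = ∫ ω, g ω * p ω ∂μ)
    (hver : μaX =ᵐ[μ.restrict B] ((μ.restrict B)[Y|m])) :
    ∫ ω, μaX ω ∂μ = ∫ ω, Ya ω ∂μ := by
  have haesm : ∀ f : Ω → ℝ, StronglyMeasurable[m] f → AEStronglyMeasurable f μ :=
    fun f hf => StronglyMeasurable.aestronglyMeasurable (μ := μ) (hf.mono hm)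
  have hmul_int : ∀ f : Ω → ℝ, Integrable f μ → AEStronglyMeasurable f μ →
      Integrable (fun ω => p ω * f ω) μ := by
    intro f hf hfm
    refine Integrable.mono' hf.abs ((haesm p hpm).mul hfm) ?_
    filter_upwards [hpbd] with ω hω
    calc ‖p ω * f ω‖ = |p ω| * |f ω| := abs_mul _ _
      _ ≤ 1 * |f ω| := mul_le_mul_of_nonneg_right hω (abs_nonneg _)
      _ = |f ω| := one_mul _
  -- set version of hK
  have hKset : ∀ g : Ω → ℝ, StronglyMeasurable[F] g → Integrable g μ →
      ∀ S : Set Ω, MeasurableSet[F] S →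
      ∫ x in S, g x * B.indicator 1 x ∂μ = ∫ x in S, g x * p x ∂μ := by
    intro g hg hgint S hS
    have hSm : MeasurableSet S := hF S hS
    have := hK (S.indicator g) (hg.indicator hS) (hgint.indicator hSm)
    rwa [integral_indicator_mul_left' μ hSm, integral_indicator_mul_left' μ hSm] at this
  -- the key set-integral identity over m-sets
  have hI : ∀ S : Set Ω, MeasurableSet[m] S →
      ∫ x in S, p x * μaX x ∂μ = ∫ x in S, p x * (μ[Ya|m]) x ∂μ := by
    intro S hS
    have hSm : MeasurableSet S := hm S hS
    have hSF : MeasurableSet[F] S := hmF S hS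
    have hres : (μ.restrict B).restrict S = μ.restrict (S ∩ B) := by
      rw [Measure.restrict_restrict hSm]
    calc ∫ x in S, p x * μaX x ∂μ
        = ∫ x in S, μaX x * p x ∂μ := by simp_rw [mul_comm]
      _ = ∫ x in S, μaX x * B.indicator 1 x ∂μ :=
          (hKset μaX (hμaXm.mono hmF) hμaXint S hSF).symm
      _ = ∫ x in S, B.indicator μaX x ∂μ := by
          simp_rw [mul_indicator_one_eq_indicator]
      _ = ∫ x in S ∩ B, μaX x ∂μ := setIntegral_indicator hB
      _ = ∫ x in S, μaX x ∂(μ.restrict B) := by rw [hres]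
      _ = ∫ x in S, ((μ.restrict B)[Y|m]) x ∂(μ.restrict B) :=
          integral_congr_ae (ae_restrict_of_ae hver)
      _ = ∫ x in S, Y x ∂(μ.restrict B) := setIntegral_condExp hm hYint.restrict hS
      _ = ∫ x in S ∩ B, Y x ∂μ := by rw [hres]
      _ = ∫ x in S ∩ B, Ya x ∂μ :=
          setIntegral_congr_fun (hSm.inter hB) (fun x hx => hYeq x hx.2)
      _ = ∫ x in S, B.indicator Ya x ∂μ := (setIntegral_indicator hB).symm
      _ = ∫ x in S, Ya x * B.indicator 1 x ∂μ := by
          simp_rw [mul_indicator_one_eq_indicator]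
      _ = ∫ x in S, Ya x * p x ∂μ := hKset Ya hYaF hYaint S hSF
      _ = ∫ x in S, p x * Ya x ∂μ := by simp_rw [mul_comm]
      _ = ∫ x in S, p x * (μ[Ya|m]) x ∂μ :=
          setIntegral_mul_eq_setIntegral_mul_condexp hm μ hpm
            (hmul_int Ya hYaint hYaint.1) hYaint hS
  have hpμa : Integrable (fun ω => p ω * μaX ω) μ := hmul_int μaX hμaXint hμaXint.1
  have hpcond : Integrable (fun ω => p ω * (μ[Ya|m]) ω) μ :=
    hmul_int _ integrable_condExp integrable_condExp.1
  have hae : (fun ω => p ω * μaX ω) =ᵐ[μ] (fun ω => p ω * (μ[Ya|m]) ω) := by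
    refine ae_eq_of_forall_setIntegral_eq_of_sigmaFinite' hm
      (fun s _ _ => hpμa.integrableOn) (fun s _ _ => hpcond.integrableOn)
      (fun s hs _ => hI s hs) ?_ ?_
    · exact (hpm.mul hμaXm).aestronglyMeasurable
    · exact (hpm.mul stronglyMeasurable_condExp).aestronglyMeasurable
  have hcancel : μaX =ᵐ[μ] (μ[Ya|m]) := by
    filter_upwards [hae, hpne] with ω h hq
    exact mul_left_cancel₀ hq h
  rw [integral_congr_ae hcancel, integral_condExp hm]

/-- From conditional independence `W ⫫ A | X` (with `A ∈ {0,1}` and propensity `π∘X`),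
the "integral pull-out" `∫ g·A = ∫ g·π(X)` holds for `σ(X,W)`-measurable integrable `g`. -/
lemma integral_mul_A_eq {Ω β : Type*} {mβ : MeasurableSpace β}
    {m F mΩ : MeasurableSpace Ω}
    [StandardBorelSpace Ω] [Nonempty Ω]
    (μ : Measure Ω) [IsProbabilityMeasure μ]
    (X : Ω → β) (A : Ω → ℝ) (W : Ω → ℝ × ℝ)
    (hX : Measurable X) (hA : Measurable A) (hW : Measurable W)
    (hmdef : m = MeasurableSpace.comap X inferInstance)
    (hFdef : F = m ⊔ MeasurableSpace.comap W inferInstance)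
    (hm : m ≤ mΩ)
    (hA01 : ∀ ω, A ω = 0 ∨ A ω = 1)
    (π : β → ℝ) (hπm : Measurable π)
    (hπver : (fun ω => π (X ω)) =ᵐ[μ] μ[A | m])
    (hπbd : ∀ᵐ ω ∂μ, |π (X ω)| ≤ 1)
    (hign : CondIndepFun m hm W A μ)
    (g : Ω → ℝ)
    (hg : StronglyMeasurable[F] g)
    (hgint : Integrable g μ) :
    ∫ ω, g ω * A ω ∂μ = ∫ ω, g ω * π (X ω) ∂μ := by
  subst hFdef; subst hmdef
  have hF : MeasurableSpace.comap X inferInstance ⊔ MeasurableSpace.comap W inferInstance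
      ≤ mΩ := sup_le hm hW.comap_le
  have hmF : MeasurableSpace.comap X inferInstance
      ≤ MeasurableSpace.comap X inferInstance ⊔ MeasurableSpace.comap W inferInstance :=
    le_sup_left
  have hπXm : StronglyMeasurable[MeasurableSpace.comap X inferInstance]
      (fun ω => π (X ω)) :=
    (hπm.comp (comap_measurable X)).stronglyMeasurable
  have hAbd : ∀ ω, ‖A ω‖ ≤ 1 := by
    intro ω; rcases hA01 ω with h | h <;> simp [h]
  have hAint : Integrable A μ :=
    Integrable.mono' (integrable_const 1)
      (StronglyMeasurable.aestronglyMeasurable (μ := μ) hA.stronglyMeasurable)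
      (Filter.Eventually.of_forall hAbd)
  have hπXint : Integrable (fun ω => π (X ω)) μ :=
    Integrable.mono' (integrable_const 1)
      (StronglyMeasurable.aestronglyMeasurable (μ := μ) (hπXm.mono hm)) hπbd
  have htot : ∫ ω, π (X ω) ∂μ = ∫ ω, A ω ∂μ := by
    rw [integral_congr_ae hπver, integral_condExp hm]
  -- the π-system generating F
  set P : Set (Set Ω) :=
    {E | ∃ u, MeasurableSet[mβ] u ∧ ∃ s, MeasurableSet s ∧ E = X ⁻¹' u ∩ W ⁻¹' s} with hPdef
  have hgen : MeasurableSpace.comap X inferInstance ⊔ MeasurableSpace.comap W inferInstance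
      = MeasurableSpace.generateFrom P := by
    apply le_antisymm
    · refine sup_le ?_ ?_
      · intro E hE
        obtain ⟨u, hu, rfl⟩ := hE
        refine MeasurableSpace.measurableSet_generateFrom ⟨u, hu, Set.univ, .univ, by simp⟩
      · intro E hE
        obtain ⟨s, hs, rfl⟩ := hE
        refine MeasurableSpace.measurableSet_generateFrom
          ⟨Set.univ, .univ, s, hs, by simp⟩
    · refine MeasurableSpace.generateFrom_le ?_
      rintro E ⟨u, hu, s, hs, rfl⟩
      refine MeasurableSet.inter ?_ ?_
      · exact (le_sup_left : MeasurableSpace.comap X inferInstance ≤ _) _ ⟨u, hu, rfl⟩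
      · exact (le_sup_right : MeasurableSpace.comap W inferInstance ≤ _) _ ⟨s, hs, rfl⟩
  have hPpi : IsPiSystem P := by
    rintro E1 ⟨u1, hu1, s1, hs1, rfl⟩ E2 ⟨u2, hu2, s2, hs2, rfl⟩ -
    exact ⟨u1 ∩ u2, hu1.inter hu2, s1 ∩ s2, hs1.inter hs2, by
      ext x; simp [Set.mem_preimage]; tauto⟩
  -- core set-integral identity on F-measurable sets
  have hcore : ∀ E : Set Ω, MeasurableSet[MeasurableSpace.comap X inferInstance ⊔ MeasurableSpace.comap W inferInstance] E →
      ∫ x in E, π (X x) ∂μ = ∫ x in E, A x ∂μ := by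
    have hCI := (condIndepFun_iff_condExp_inter_preimage_eq_mul
      (hm' := hX.comap_le) (μ := μ) hW hA).mp hign
    have hindA : (A ⁻¹' {1}).indicator (fun _ => (1 : ℝ)) = A := by
      funext ω; rcases hA01 ω with h | h <;> simp [Set.indicator_apply, h]
    refine fun E hE => MeasurableSpace.induction_on_inter
      (m := MeasurableSpace.comap X inferInstance ⊔ MeasurableSpace.comap W inferInstance)
      (C := fun E _ => ∫ x in E, π (X x) ∂μ = ∫ x in E, A x ∂μ) hgen hPpi (by simp)
      (fun E hE => ?_) (fun E hE hC => ?_) (fun f hd hfm hC => ?_) E hE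
    · -- basic
      obtain ⟨u, hu, s, hs, rfl⟩ := hE
      have hUm : MeasurableSet[MeasurableSpace.comap X inferInstance] (X ⁻¹' u) :=
        ⟨u, hu, rfl⟩
      have hU : MeasurableSet[mΩ] (X ⁻¹' u) := hm _ hUm
      have hT : MeasurableSet[mΩ] (W ⁻¹' s) := hW hs
      have hA1 : MeasurableSet[mΩ] (A ⁻¹' {1}) := hA (measurableSet_singleton 1)
      have hindT_int : Integrable ((W ⁻¹' s).indicator (fun _ => (1:ℝ))) μ :=
        (integrable_const 1).indicator hT
      have hindTA_int : Integrable ((W ⁻¹' s ∩ A ⁻¹' {1}).indicator (fun _ => (1:ℝ))) μ :=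
        (integrable_const 1).indicator (hT.inter hA1)
      -- specialize conditional independence
      have hc1 : (μ⟦W ⁻¹' s ∩ A ⁻¹' {1}|MeasurableSpace.comap X inferInstance⟧) =ᵐ[μ]
          fun ω => (μ⟦W ⁻¹' s|MeasurableSpace.comap X inferInstance⟧) ω * π (X ω) := by
        refine (hCI s {1} hs (measurableSet_singleton 1)).trans ?_
        have : (μ⟦A ⁻¹' {1}|MeasurableSpace.comap X inferInstance⟧) =ᵐ[μ] fun ω => π (X ω) := by
          rw [hindA]; exact hπver.symm
        filter_upwards [this] with ω hω
        rw [hω]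
      -- RHS : ∫ A over E
      have hR : ∫ x in X ⁻¹' u ∩ W ⁻¹' s, A x ∂μ
          = ∫ x in X ⁻¹' u, (μ⟦W ⁻¹' s|MeasurableSpace.comap X inferInstance⟧) x * π (X x) ∂μ := by
        have e1 : ∀ x, (W ⁻¹' s).indicator A x
            = (W ⁻¹' s ∩ A ⁻¹' {1}).indicator (fun _ => (1:ℝ)) x := by
          intro x
          by_cases hx : x ∈ W ⁻¹' s
          · rcases hA01 x with h | h <;>
              simp [Set.indicator_apply, hx, h]
          · simp [Set.indicator_apply, hx]
        calc ∫ x in X ⁻¹' u ∩ W ⁻¹' s, A x ∂μ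
            = ∫ x in X ⁻¹' u, (W ⁻¹' s).indicator A x ∂μ := (setIntegral_indicator hT).symm
          _ = ∫ x in X ⁻¹' u, (W ⁻¹' s ∩ A ⁻¹' {1}).indicator (fun _ => (1:ℝ)) x ∂μ := by
              simp_rw [e1]
          _ = ∫ x in X ⁻¹' u, (μ⟦W ⁻¹' s ∩ A ⁻¹' {1}|MeasurableSpace.comap X inferInstance⟧) x ∂μ :=
              (setIntegral_condExp hm hindTA_int hUm).symm
          _ = ∫ x in X ⁻¹' u, (μ⟦W ⁻¹' s|MeasurableSpace.comap X inferInstance⟧) x * π (X x) ∂μ :=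
              setIntegral_congr_ae hU (hc1.mono fun x hx _ => hx)
      -- LHS : ∫ π(X) over E
      have hL : ∫ x in X ⁻¹' u ∩ W ⁻¹' s, π (X x) ∂μ
          = ∫ x in X ⁻¹' u, (μ⟦W ⁻¹' s|MeasurableSpace.comap X inferInstance⟧) x * π (X x) ∂μ := by
        have e2 : ∀ x, (W ⁻¹' s).indicator (fun y => π (X y)) x
            = π (X x) * (W ⁻¹' s).indicator (fun _ => (1:ℝ)) x := by
          intro x
          by_cases hx : x ∈ W ⁻¹' s <;> simp [Set.indicator_apply, hx]
        have hprod_int : Integrable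
            (fun x => π (X x) * (W ⁻¹' s).indicator (fun _ => (1:ℝ)) x) μ := by
          refine Integrable.mono' (integrable_const 1)
            (((hπXm.mono hm).aestronglyMeasurable).mul
              hindT_int.1) ?_
          filter_upwards [hπbd] with ω hω
          by_cases hx : ω ∈ W ⁻¹' s <;>
            simp [Set.indicator_apply, hx, abs_mul, hω, abs_nonneg]
        calc ∫ x in X ⁻¹' u ∩ W ⁻¹' s, π (X x) ∂μ
            = ∫ x in X ⁻¹' u, (W ⁻¹' s).indicator (fun y => π (X y)) x ∂μ :=
              (setIntegral_indicator hT).symm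
          _ = ∫ x in X ⁻¹' u, π (X x) * (W ⁻¹' s).indicator (fun _ => (1:ℝ)) x ∂μ := by
              simp_rw [e2]
          _ = ∫ x in X ⁻¹' u, π (X x)
                * (μ[(W ⁻¹' s).indicator (fun _ => (1:ℝ))|MeasurableSpace.comap X inferInstance]) x ∂μ :=
              setIntegral_mul_eq_setIntegral_mul_condexp hm μ hπXm hprod_int hindT_int hUm
          _ = ∫ x in X ⁻¹' u, (μ⟦W ⁻¹' s|MeasurableSpace.comap X inferInstance⟧) x * π (X x) ∂μ := by
              simp_rw [mul_comm]
      rw [hL, hR]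
    · -- compl
      have hEm : MeasurableSet[mΩ] E := hF E hE
      have h1 := integral_add_compl hEm hπXint
      have h2 := integral_add_compl hEm hAint
      have := htot
      linarith
    · -- iUnion
      show ∫ x in ⋃ i, f i, π (X x) ∂μ = ∫ x in ⋃ i, f i, A x ∂μ
      rw [integral_iUnion (fun i => hF _ (hfm i)) hd hπXint.integrableOn,
        integral_iUnion (fun i => hF _ (hfm i)) hd hAint.integrableOn]
      exact tsum_congr hC
  -- conclude E[A|F] = π∘X
  have hAF : (fun ω => π (X ω)) =ᵐ[μ] μ[A|MeasurableSpace.comap X inferInstance ⊔ MeasurableSpace.comap W inferInstance] := by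
    refine ae_eq_condExp_of_forall_setIntegral_eq hF hAint ?_ ?_ ?_
    · exact fun s _ _ => hπXint.integrableOn
    · exact fun s hs _ => hcore s hs
    · exact (hπXm.mono hmF).aestronglyMeasurable
  -- pull-out
  have hgA_int : Integrable (fun ω => g ω * A ω) μ := by
    refine Integrable.mono' hgint.abs
      (hgint.1.mul (StronglyMeasurable.aestronglyMeasurable (μ := μ) hA.stronglyMeasurable)) ?_
    refine Filter.Eventually.of_forall fun ω => ?_
    calc ‖g ω * A ω‖ = |g ω| * ‖A ω‖ := abs_mul _ _
      _ ≤ |g ω| * 1 := mul_le_mul_of_nonneg_left (hAbd ω) (abs_nonneg _)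
      _ = |g ω| := mul_one _
  calc ∫ ω, g ω * A ω ∂μ = ∫ ω, (fun ω => g ω * A ω) ω ∂μ := rfl
    _ = ∫ ω, g ω * (μ[A|MeasurableSpace.comap X inferInstance ⊔ MeasurableSpace.comap W inferInstance]) ω ∂μ := by
        have := integral_mul_eq_integral_mul_condexp hF μ hg
          (hgA_int.congr (Filter.Eventually.of_forall fun ω => rfl)) hAint
        exact this
    _ = ∫ ω, g ω * π (X ω) ∂μ := by
        refine integral_congr_ae ?_
        filter_upwards [hAF] with ω hω
        rw [← hω]

/-- **Identification of the average treatment effect.**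
Under consistency, positivity and ignorability, `E[Y¹ − Y⁰] = E[μ₁(X) − μ₀(X)]`,
where `μₐ(X)` is a version of `E[Y | A = a, X]` (the conditional expectation of `Y`
given `σ(X)` under the law restricted to `{A = a}`). -/
theorem ate_identification
    {Ω : Type*} [MeasurableSpace Ω] [StandardBorelSpace Ω] [Nonempty Ω]
    (μ : Measure Ω) [IsProbabilityMeasure μ]
    {β : Type*} [MeasurableSpace β]
    (X : Ω → β) (A Y Y1 Y0 : Ω → ℝ)
    (hX : Measurable X) (hA : Measurable A) (hY : Measurable Y)
    (hY1m : Measurable Y1) (hY0m : Measurable Y0)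
    -- A takes values in {0,1}
    (hA01 : ∀ ω, A ω = 0 ∨ A ω = 1)
    -- integrability
    (hYint : Integrable Y μ) (hY1int : Integrable Y1 μ) (hY0int : Integrable Y0 μ)
    -- (i) consistency: Y = A·Y¹ + (1−A)·Y⁰
    (hcons : ∀ ω, Y ω = A ω * Y1 ω + (1 - A ω) * Y0 ω)
    -- propensity score: π ∘ X is a version of P(A = 1 | X) = E[A | σ(X)]
    (π : β → ℝ) (hπm : Measurable π)
    (hπver : (fun ω => π (X ω)) =ᵐ[μ] μ[A | MeasurableSpace.comap X inferInstance])
    -- (ii) positivity: 0 < π(X) < 1 a.s.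
    (hpos : ∀ᵐ ω ∂μ, 0 < π (X ω) ∧ π (X ω) < 1)
    -- (iii) ignorability: (Y¹, Y⁰) ⫫ A | X
    (hign : CondIndepFun (MeasurableSpace.comap X inferInstance) hX.comap_le
      (fun ω => (Y1 ω, Y0 ω)) A μ)
    -- outcome regressions: μₐ ∘ X is a version of E[Y | σ(X)] under μ restricted to {A = a}
    (μ1 μ0 : β → ℝ) (hμ1m : Measurable μ1) (hμ0m : Measurable μ0)
    (hμ1ver : (fun ω => μ1 (X ω)) =ᵐ[μ.restrict {ω | A ω = 1}]
      (μ.restrict {ω | A ω = 1})[Y | MeasurableSpace.comap X inferInstance])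
    (hμ0ver : (fun ω => μ0 (X ω)) =ᵐ[μ.restrict {ω | A ω = 0}]
      (μ.restrict {ω | A ω = 0})[Y | MeasurableSpace.comap X inferInstance])
    (hμ1int : Integrable (fun ω => μ1 (X ω)) μ)
    (hμ0int : Integrable (fun ω => μ0 (X ω)) μ) :
    ∫ ω, (Y1 ω - Y0 ω) ∂μ = ∫ ω, (μ1 (X ω) - μ0 (X ω)) ∂μ := by
  have hW : Measurable (fun ω => (Y1 ω, Y0 ω)) := hY1m.prodMk hY0m
  have hm := hX.comap_le
  have hF : MeasurableSpace.comap X inferInstance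
      ⊔ MeasurableSpace.comap (fun ω => (Y1 ω, Y0 ω)) inferInstance
      ≤ ‹MeasurableSpace Ω› := sup_le hm hW.comap_le
  have hπbd : ∀ᵐ ω ∂μ, |π (X ω)| ≤ 1 := by
    filter_upwards [hpos] with ω h
    rw [abs_of_nonneg h.1.le]; exact h.2.le
  have hK1 : ∀ g : Ω → ℝ, StronglyMeasurable[MeasurableSpace.comap X inferInstance
        ⊔ MeasurableSpace.comap (fun ω => (Y1 ω, Y0 ω)) inferInstance] g →
      Integrable g μ → ∫ ω, g ω * A ω ∂μ = ∫ ω, g ω * π (X ω) ∂μ :=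
    fun g hg hgi => integral_mul_A_eq μ X A (fun ω => (Y1 ω, Y0 ω)) hX hA hW rfl rfl
      hm hA01 π hπm hπver hπbd hign g hg hgi
  -- integrability of products
  have hAbd : ∀ ω, ‖A ω‖ ≤ 1 := by
    intro ω; rcases hA01 ω with h | h <;> simp [h]
  have hgA : ∀ g : Ω → ℝ, Integrable g μ → Integrable (fun ω => g ω * A ω) μ := by
    intro g hg
    refine Integrable.mono' hg.abs
      (hg.1.mul (StronglyMeasurable.aestronglyMeasurable (μ := μ) hA.stronglyMeasurable)) ?_
    refine Filter.Eventually.of_forall fun ω => ?_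
    calc ‖g ω * A ω‖ = |g ω| * ‖A ω‖ := abs_mul _ _
      _ ≤ |g ω| * 1 := mul_le_mul_of_nonneg_left (hAbd ω) (abs_nonneg _)
      _ = |g ω| := mul_one _
  have hgπ : ∀ g : Ω → ℝ, Integrable g μ → Integrable (fun ω => g ω * π (X ω)) μ := by
    intro g hg
    refine Integrable.mono' hg.abs
      (hg.1.mul (StronglyMeasurable.aestronglyMeasurable (μ := μ)
        (hπm.comp hX).stronglyMeasurable)) ?_
    filter_upwards [hπbd] with ω hω
    calc ‖g ω * π (X ω)‖ = |g ω| * |π (X ω)| := abs_mul _ _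
      _ ≤ |g ω| * 1 := mul_le_mul_of_nonneg_left hω (abs_nonneg _)
      _ = |g ω| := mul_one _
  -- strong measurability of Y1, Y0 w.r.t. the join
  have hY1W : Measurable[MeasurableSpace.comap (fun ω => (Y1 ω, Y0 ω)) inferInstance] Y1 :=
    fun s hs => ⟨Prod.fst ⁻¹' s, measurable_fst hs, rfl⟩
  have hY0W : Measurable[MeasurableSpace.comap (fun ω => (Y1 ω, Y0 ω)) inferInstance] Y0 :=
    fun s hs => ⟨Prod.snd ⁻¹' s, measurable_snd hs, rfl⟩
  have hY1F : StronglyMeasurable[MeasurableSpace.comap X inferInstance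
      ⊔ MeasurableSpace.comap (fun ω => (Y1 ω, Y0 ω)) inferInstance] Y1 :=
    (hY1W.mono (le_sup_right (a := MeasurableSpace.comap X inferInstance)) le_rfl).stronglyMeasurable
  have hY0F : StronglyMeasurable[MeasurableSpace.comap X inferInstance
      ⊔ MeasurableSpace.comap (fun ω => (Y1 ω, Y0 ω)) inferInstance] Y0 :=
    (hY0W.mono (le_sup_right (a := MeasurableSpace.comap X inferInstance)) le_rfl).stronglyMeasurable
  -- arm 1
  have hind1 : Set.indicator {ω | A ω = 1} (1 : Ω → ℝ) = A := by
    funext ω; rcases hA01 ω with h | h <;>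
      simp [Set.indicator_apply, Set.mem_setOf_eq, h]
  have h1 : ∫ ω, μ1 (X ω) ∂μ = ∫ ω, Y1 ω ∂μ := by
    refine arm_identification hm le_sup_left hF μ Y Y1 (fun ω => π (X ω))
      (fun ω => μ1 (X ω)) {ω | A ω = 1} ?_ hY1F hY1int hYint
      ((hπm.comp (comap_measurable X)).stronglyMeasurable) hπbd
      (hpos.mono fun ω h => ne_of_gt h.1)
      ((hμ1m.comp (comap_measurable X)).stronglyMeasurable) hμ1int
      (fun ω h => ?_) (fun g hg hgi => ?_) hμ1ver
    · exact hA (measurableSet_singleton 1)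
    · have hω : A ω = 1 := h
      rw [hcons ω, hω]; ring
    · rw [show (∫ ω, g ω * Set.indicator {ω | A ω = 1} (1 : Ω → ℝ) ω ∂μ)
          = ∫ ω, g ω * A ω ∂μ by rw [hind1]]
      exact hK1 g hg hgi
  -- arm 0
  have hind0 : Set.indicator {ω | A ω = 0} (1 : Ω → ℝ) = fun ω => 1 - A ω := by
    funext ω; rcases hA01 ω with h | h <;>
      simp [Set.indicator_apply, Set.mem_setOf_eq, h]
  have hK0 : ∀ g : Ω → ℝ, StronglyMeasurable[MeasurableSpace.comap X inferInstance
        ⊔ MeasurableSpace.comap (fun ω => (Y1 ω, Y0 ω)) inferInstance] g →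
      Integrable g μ →
      ∫ ω, g ω * (1 - A ω) ∂μ = ∫ ω, g ω * (1 - π (X ω)) ∂μ := by
    intro g hg hgi
    have e1 : ∫ ω, g ω * (1 - A ω) ∂μ = ∫ ω, g ω ∂μ - ∫ ω, g ω * A ω ∂μ := by
      rw [← integral_sub hgi (hgA g hgi)]
      congr 1; funext ω; ring
    have e2 : ∫ ω, g ω * (1 - π (X ω)) ∂μ = ∫ ω, g ω ∂μ - ∫ ω, g ω * π (X ω) ∂μ := by
      rw [← integral_sub hgi (hgπ g hgi)]
      congr 1; funext ω; ring
    rw [e1, e2, hK1 g hg hgi]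
  have h0 : ∫ ω, μ0 (X ω) ∂μ = ∫ ω, Y0 ω ∂μ := by
    refine arm_identification hm le_sup_left hF μ Y Y0 (fun ω => 1 - π (X ω))
      (fun ω => μ0 (X ω)) {ω | A ω = 0} ?_ hY0F hY0int hYint
      ((measurable_const.sub (hπm.comp (comap_measurable X))).stronglyMeasurable) ?_
      (hpos.mono fun ω h => sub_ne_zero_of_ne (ne_of_gt h.2))
      ((hμ0m.comp (comap_measurable X)).stronglyMeasurable) hμ0int
      (fun ω h => ?_) (fun g hg hgi => ?_) hμ0ver
    · exact hA (measurableSet_singleton 0)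
    · filter_upwards [hpos] with ω h
      rw [abs_of_nonneg (by linarith [h.2])]
      linarith [h.1]
    · have hω : A ω = 0 := h
      rw [hcons ω, hω]; ring
    · rw [show (∫ ω, g ω * Set.indicator {ω | A ω = 0} (1 : Ω → ℝ) ω ∂μ)
          = ∫ ω, g ω * (1 - A ω) ∂μ by rw [hind0]]
      exact hK0 g hg hgi
  rw [integral_sub hY1int hY0int, integral_sub hμ1int hμ0int, h1, h0]
end

section
/- Under the setup of the previous statement, if additionally π̄(x) ≥ ε > 0 for all x, then | E[ φ̄_1(Z) − φ_1(Z) ] | ≤ (1/ε) · ‖π̄ − π‖ · ‖μ̄_1 − μ_1‖, where ‖f‖² = ∫ f(x)² dP_X(x) denotes the squared L²(P_X) norm. -/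
open MeasureTheory ProbabilityTheory

/-- Pull-out lemma: if `h ∘ X` is a version of `ν[g | σ(X)]`, then for measurable `f`,
`∫ f(X) g = ∫ f(X) h(X)` provided the integrands are integrable. -/
lemma dr_pull_integral {Ω : Type*} [m0 : MeasurableSpace Ω] (ν : Measure Ω) [IsFiniteMeasure ν]
    {β : Type*} [MeasurableSpace β] {X : Ω → β} (hX : Measurable X)
    {f : β → ℝ} (hf : Measurable f) {g : Ω → ℝ} (hg : Integrable g ν)
    (hfg : Integrable (fun ω => f (X ω) * g ω) ν)
    {h : β → ℝ}
    (hver : (fun ω => h (X ω)) =ᵐ[ν] ν[g | MeasurableSpace.comap X inferInstance]) :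
    ∫ ω, f (X ω) * g ω ∂ν = ∫ ω, f (X ω) * h (X ω) ∂ν := by
  have hm : MeasurableSpace.comap X inferInstance ≤ m0 := hX.comap_le
  have hXm : @Measurable Ω β (MeasurableSpace.comap X inferInstance) _ X :=
    Measurable.of_comap_le le_rfl
  have hfsm : @StronglyMeasurable Ω ℝ _ (MeasurableSpace.comap X inferInstance)
      (fun ω => f (X ω)) := (hf.comp hXm).stronglyMeasurable
  have hfg' : Integrable ((fun ω => f (X ω)) * g) ν := hfg
  have hpull := condExp_mul_of_stronglyMeasurable_left hfsm hfg' hg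
  calc ∫ ω, f (X ω) * g ω ∂ν
      = ∫ ω, ((fun ω => f (X ω)) * g) ω ∂ν := rfl
    _ = ∫ ω, (ν[(fun ω => f (X ω)) * g | MeasurableSpace.comap X inferInstance]) ω ∂ν :=
        (integral_condExp hm).symm
    _ = ∫ ω, f (X ω) * (ν[g | MeasurableSpace.comap X inferInstance]) ω ∂ν :=
        integral_congr_ae (by filter_upwards [hpull] with ω hω; simpa using hω)
    _ = ∫ ω, f (X ω) * h (X ω) ∂ν :=
        integral_congr_ae (by filter_upwards [hver] with ω hω; rw [hω])

/-- **Cauchy–Schwarz bound on the doubly-robust bias.**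
If moreover `π̄ ≥ ε > 0`, then `|E[φ̄₁(Z) − φ₁(Z)]| ≤ (1/ε)‖π̄ − π‖‖μ̄₁ − μ₁‖`,
where `‖f‖² = ∫ f(x)² dP_X(x)` is the squared `L²(P_X)` norm. -/
theorem dr_bias_cauchy_schwarz_bound
    {Ω : Type*} [MeasurableSpace Ω]
    (μ : Measure Ω) [IsProbabilityMeasure μ]
    {β : Type*} [MeasurableSpace β]
    (X : Ω → β) (A Y : Ω → ℝ)
    (hX : Measurable X) (hA : Measurable A) (hY : Measurable Y)
    -- A takes values in {0,1}, Y square-integrable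
    (hA01 : ∀ ω, A ω = 0 ∨ A ω = 1)
    (hY2 : MemLp Y 2 μ)
    -- propensity score: π ∘ X is a version of P(A = 1 | X), with 0 < π(X) < 1 a.s.
    (π : β → ℝ) (hπm : Measurable π)
    (hπver : (fun ω => π (X ω)) =ᵐ[μ] μ[A | MeasurableSpace.comap X inferInstance])
    (hpos : ∀ᵐ ω ∂μ, 0 < π (X ω) ∧ π (X ω) < 1)
    -- outcome regression: μ₁ ∘ X is a version of E[Y | σ(X)] under μ restricted to {A = 1}
    (μ1 : β → ℝ) (hμ1m : Measurable μ1)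
    (hμ1ver : (fun ω => μ1 (X ω)) =ᵐ[μ.restrict {ω | A ω = 1}]
      (μ.restrict {ω | A ω = 1})[Y | MeasurableSpace.comap X inferInstance])
    (hμ1sq : MemLp (fun ω => μ1 (X ω)) 2 μ)
    -- fixed nuisance functions, with π̄ bounded away from 0 and 1
    (πb μ1b : β → ℝ) (hπbm : Measurable πb) (hμ1bm : Measurable μ1b)
    (ε : ℝ) (hε : 0 < ε) (hπbbd : ∀ x, ε ≤ πb x ∧ πb x ≤ 1 - ε)
    (hμ1bsq : MemLp (fun ω => μ1b (X ω)) 2 μ) :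
    |∫ ω, ((A ω / πb (X ω) * (Y ω - μ1b (X ω)) + μ1b (X ω))
          - (A ω / π (X ω) * (Y ω - μ1 (X ω)) + μ1 (X ω))) ∂μ|
      ≤ (1 / ε) * Real.sqrt (∫ x, (πb x - π x) ^ 2 ∂(μ.map X))
          * Real.sqrt (∫ x, (μ1b x - μ1 x) ^ 2 ∂(μ.map X)) := by
  have hεne : ε ≠ 0 := ne_of_gt hε
  have hRHSnn : 0 ≤ (1 / ε) * Real.sqrt (∫ x, (πb x - π x) ^ 2 ∂(μ.map X))
          * Real.sqrt (∫ x, (μ1b x - μ1 x) ^ 2 ∂(μ.map X)) := by positivity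
  set D : Ω → ℝ := fun ω => ((A ω / πb (X ω) * (Y ω - μ1b (X ω)) + μ1b (X ω))
          - (A ω / π (X ω) * (Y ω - μ1 (X ω)) + μ1 (X ω))) with hD_def
  by_cases hD : Integrable D μ
  swap
  · rw [integral_undef hD]; simpa using hRHSnn
  set S : Set Ω := {ω | A ω = 1} with hS_def
  have hS : MeasurableSet S := hA (measurableSet_singleton 1)
  -- three pieces
  set T1 : Ω → ℝ := fun ω => A ω * (((πb (X ω))⁻¹ - (π (X ω))⁻¹) * (Y ω - μ1 (X ω))) with hT1_def
  set T2 : Ω → ℝ := fun ω => ((μ1 (X ω) - μ1b (X ω)) / πb (X ω)) * A ω with hT2_def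
  set T3 : Ω → ℝ := fun ω => μ1b (X ω) - μ1 (X ω) with hT3_def
  have hsplit : ∀ ω, D ω = T1 ω + T2 ω + T3 ω := by
    intro ω; simp only [hD_def, hT1_def, hT2_def, hT3_def]; ring
  have hAbd : ∀ ω, |A ω| ≤ 1 := by
    intro ω; rcases hA01 ω with h | h <;> simp [h]
  have hπb_pos : ∀ x, 0 < πb x := fun x => lt_of_lt_of_le hε (hπbbd x).1
  have hπbinv : ∀ x, |(πb x)⁻¹| ≤ ε⁻¹ := by
    intro x
    rw [abs_inv, abs_of_pos (hπb_pos x)]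
    exact inv_anti₀ hε (hπbbd x).1
  have hμd : Integrable (fun ω => μ1 (X ω) - μ1b (X ω)) μ :=
    (hμ1sq.sub hμ1bsq).integrable one_le_two
  -- integrability of the pieces
  have hT2i : Integrable T2 μ := by
    refine Integrable.mono' ((hμd.abs).const_mul ε⁻¹) ?_ ?_
    · exact ((((hμ1m.comp hX).sub (hμ1bm.comp hX)).div (hπbm.comp hX)).mul hA).aestronglyMeasurable
    · refine Filter.Eventually.of_forall fun ω => ?_
      simp only [hT2_def, Real.norm_eq_abs, abs_mul, div_eq_mul_inv]
      calc |μ1 (X ω) - μ1b (X ω)| * |(πb (X ω))⁻¹| * |A ω|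
          ≤ |μ1 (X ω) - μ1b (X ω)| * ε⁻¹ * 1 := by
            refine mul_le_mul (mul_le_mul le_rfl (hπbinv _) (abs_nonneg _) (abs_nonneg _))
              (hAbd ω) (abs_nonneg _) ?_
            positivity
        _ = ε⁻¹ * |μ1 (X ω) - μ1b (X ω)| := by ring
  have hT3i : Integrable T3 μ := (hμ1bsq.sub hμ1sq).integrable one_le_two
  have hT1i : Integrable T1 μ := by
    refine (hD.sub (hT2i.add hT3i)).congr (Filter.Eventually.of_forall fun ω => ?_)
    simp only [Pi.sub_apply, Pi.add_apply, hsplit ω]; ring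
  -- `T1` is the indicator of `S` applied to `(1/π̄ - 1/π)(X) (Y - μ₁(X))`
  have hT1ind : T1 = S.indicator (fun ω => ((πb (X ω))⁻¹ - (π (X ω))⁻¹) * (Y ω - μ1 (X ω))) := by
    funext ω
    rcases hA01 ω with h | h
    · have hω : ω ∉ S := by simp [hS_def, h]
      simp [hT1_def, h, Set.indicator_of_notMem hω]
    · have hω : ω ∈ S := by simp [hS_def, h]
      simp [hT1_def, h, Set.indicator_of_mem hω]
  -- integral of T1 vanishes
  have hT1zero : ∫ ω, T1 ω ∂μ = 0 := by
    rw [show (fun ω => T1 ω) = T1 from rfl, hT1ind, integral_indicator hS]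
    have hYi' : Integrable Y (μ.restrict S) := (hY2.restrict S).integrable one_le_two
    have hμ1i' : Integrable (fun ω => μ1 (X ω)) (μ.restrict S) :=
      (hμ1sq.restrict S).integrable one_le_two
    have hXm : @Measurable Ω β (MeasurableSpace.comap X inferInstance) _ X :=
      Measurable.of_comap_le le_rfl
    have hg0 : (fun ω => (0 : β → ℝ) (X ω)) =ᵐ[μ.restrict S]
        (μ.restrict S)[fun ω => Y ω - μ1 (X ω) | MeasurableSpace.comap X inferInstance] := by
      have h1 : (μ.restrict S)[fun ω => Y ω - μ1 (X ω) | MeasurableSpace.comap X inferInstance]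
          =ᵐ[μ.restrict S]
            (μ.restrict S)[Y | MeasurableSpace.comap X inferInstance]
            - (μ.restrict S)[fun ω => μ1 (X ω) | MeasurableSpace.comap X inferInstance] := by
        have := condExp_sub (m := MeasurableSpace.comap X inferInstance) hYi' hμ1i'
        refine Filter.EventuallyEq.trans ?_ this
        refine condExp_congr_ae (Filter.Eventually.of_forall fun ω => ?_)
        simp
      have h2 : (μ.restrict S)[fun ω => μ1 (X ω) | MeasurableSpace.comap X inferInstance]
          = fun ω => μ1 (X ω) :=
        condExp_of_stronglyMeasurable hX.comap_le
          ((hμ1m.comp hXm).stronglyMeasurable) hμ1i'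
      filter_upwards [h1, hμ1ver] with ω h1ω h2ω
      simp only [Pi.sub_apply] at h1ω
      rw [h1ω, h2, ← h2ω]
      simp
    have hfg : Integrable (fun ω => ((πb (X ω))⁻¹ - (π (X ω))⁻¹) * (Y ω - μ1 (X ω)))
        (μ.restrict S) := by
      exact (integrable_indicator_iff hS).mp (hT1ind ▸ hT1i)
    have := dr_pull_integral (μ.restrict S) hX ((hπbm.inv).sub (hπm.inv))
      (hYi'.sub hμ1i') hfg hg0
    simpa using this
  -- integral of T2 equals integral against π
  have hAi : Integrable A μ := by
    refine Integrable.mono' (integrable_const 1) hA.aestronglyMeasurable ?_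
    exact Filter.Eventually.of_forall fun ω => by simpa using hAbd ω
  have hT2eq : ∫ ω, T2 ω ∂μ
      = ∫ ω, ((μ1 (X ω) - μ1b (X ω)) / πb (X ω)) * π (X ω) ∂μ := by
    exact dr_pull_integral μ hX (f := fun x => (μ1 x - μ1b x) / πb x)
      (((hμ1m.sub hμ1bm)).div hπbm) hAi hT2i hπver
  -- integrability of the target function
  have hprod_bound : Integrable (fun ω => ε⁻¹ * (|πb (X ω) - π (X ω)| * |μ1b (X ω) - μ1 (X ω)|)) μ := by
    have hπ2 : MemLp (fun ω => πb (X ω) - π (X ω)) 2 μ := by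
      refine MemLp.of_bound (((hπbm.comp hX).sub (hπm.comp hX)).aestronglyMeasurable) 1 ?_
      filter_upwards [hpos] with ω hω
      have h1 : ε ≤ πb (X ω) := (hπbbd _).1
      have h2 : πb (X ω) ≤ 1 - ε := (hπbbd _).2
      rw [Real.norm_eq_abs, abs_le]
      constructor <;> nlinarith [hω.1, hω.2]
    have hμ2 : MemLp (fun ω => μ1b (X ω) - μ1 (X ω)) 2 μ := hμ1bsq.sub hμ1sq
    refine Integrable.const_mul ?_ _
    refine Integrable.mono' (((hπ2.integrable_sq).add (hμ2.integrable_sq)).const_mul (1/2)) ?_ ?_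
    · exact ((((hπbm.comp hX).sub (hπm.comp hX)).abs).mul
        (((hμ1bm.comp hX).sub (hμ1m.comp hX)).abs)).aestronglyMeasurable
    · refine Filter.Eventually.of_forall fun ω => ?_
      have h2 := two_mul_le_add_sq |πb (X ω) - π (X ω)| |μ1b (X ω) - μ1 (X ω)|
      rw [Real.norm_eq_abs, abs_mul, abs_abs, abs_abs]
      rw [sq_abs, sq_abs] at h2
      simp only [Pi.add_apply]
      linarith [h2]
  have hFi : Integrable (fun ω => ((μ1 (X ω) - μ1b (X ω)) / πb (X ω)) * π (X ω)) μ := by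
    refine Integrable.mono' ((hμd.abs).const_mul ε⁻¹) ?_ ?_
    · exact ((((hμ1m.comp hX).sub (hμ1bm.comp hX)).div (hπbm.comp hX)).mul
        (hπm.comp hX)).aestronglyMeasurable
    · filter_upwards [hpos] with ω hω
      simp only [Real.norm_eq_abs, abs_mul, div_eq_mul_inv]
      have hπ1 : |π (X ω)| ≤ 1 := by rw [abs_le]; constructor <;> linarith [hω.1, hω.2]
      calc |μ1 (X ω) - μ1b (X ω)| * |(πb (X ω))⁻¹| * |π (X ω)|
          ≤ |μ1 (X ω) - μ1b (X ω)| * ε⁻¹ * 1 := by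
            refine mul_le_mul (mul_le_mul le_rfl (hπbinv _) (abs_nonneg _) (abs_nonneg _))
              hπ1 (abs_nonneg _) ?_
            positivity
        _ = ε⁻¹ * |μ1 (X ω) - μ1b (X ω)| := by ring
  -- compute the integral of D
  have hDeq : ∫ ω, D ω ∂μ
      = ∫ ω, (((μ1 (X ω) - μ1b (X ω)) / πb (X ω)) * π (X ω) + (μ1b (X ω) - μ1 (X ω))) ∂μ := by
    calc ∫ ω, D ω ∂μ = ∫ ω, (T1 ω + T2 ω + T3 ω) ∂μ :=
          integral_congr_ae (Filter.Eventually.of_forall hsplit)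
      _ = (∫ ω, T1 ω ∂μ) + (∫ ω, T2 ω ∂μ) + ∫ ω, T3 ω ∂μ := by
          have hadd1 : Integrable (fun ω => T1 ω + T2 ω) μ := hT1i.add hT2i
          rw [integral_add hadd1 hT3i, integral_add hT1i hT2i]
      _ = (∫ ω, ((μ1 (X ω) - μ1b (X ω)) / πb (X ω)) * π (X ω) ∂μ) + ∫ ω, T3 ω ∂μ := by
          rw [hT1zero, hT2eq]; ring
      _ = ∫ ω, (((μ1 (X ω) - μ1b (X ω)) / πb (X ω)) * π (X ω) + (μ1b (X ω) - μ1 (X ω))) ∂μ := by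
          rw [← integral_add hFi hT3i]
  -- bound the integral
  have hbound : |∫ ω, D ω ∂μ|
      ≤ ε⁻¹ * ∫ ω, |πb (X ω) - π (X ω)| * |μ1b (X ω) - μ1 (X ω)| ∂μ := by
    rw [hDeq]
    have h1 : |∫ ω, (((μ1 (X ω) - μ1b (X ω)) / πb (X ω)) * π (X ω) + (μ1b (X ω) - μ1 (X ω))) ∂μ|
        ≤ ∫ ω, ε⁻¹ * (|πb (X ω) - π (X ω)| * |μ1b (X ω) - μ1 (X ω)|) ∂μ := by
      have h0 := norm_integral_le_integral_norm
        (fun ω => ((μ1 (X ω) - μ1b (X ω)) / πb (X ω)) * π (X ω) + (μ1b (X ω) - μ1 (X ω))) (μ := μ)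
      rw [Real.norm_eq_abs] at h0
      refine h0.trans ?_
      simp only [Real.norm_eq_abs]
      refine integral_mono_ae ((hFi.add hT3i).abs) hprod_bound ?_
      refine Filter.Eventually.of_forall fun ω => ?_
      dsimp only
      set a := πb (X ω); set b := π (X ω); set c := μ1b (X ω); set d := μ1 (X ω)
      have hane : a ≠ 0 := ne_of_gt (hπb_pos _)
      have heq : (d - c) / a * b + (c - d) = (a - b) * (c - d) * a⁻¹ := by
        field_simp; ring
      rw [heq, abs_mul, abs_mul]
      calc |a - b| * |c - d| * |a⁻¹| ≤ |a - b| * |c - d| * ε⁻¹ := by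
            refine mul_le_mul_of_nonneg_left (hπbinv _) (by positivity)
        _ = ε⁻¹ * (|a - b| * |c - d|) := by ring
    rw [integral_const_mul] at h1
    exact h1
  -- move to the pushforward measure and apply Cauchy–Schwarz
  have hmap_prob : IsProbabilityMeasure (μ.map X) := Measure.isProbabilityMeasure_map hX.aemeasurable
  have hπ2' : MemLp (fun x => |πb x - π x|) 2 (μ.map X) := by
    refine MemLp.of_bound ((hπbm.sub hπm).abs.aestronglyMeasurable) 1 ?_
    rw [ae_map_iff hX.aemeasurable]
    · filter_upwards [hpos] with ω hω
      have h1 : ε ≤ πb (X ω) := (hπbbd _).1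
      have h2 : πb (X ω) ≤ 1 - ε := (hπbbd _).2
      rw [Real.norm_eq_abs, abs_abs, abs_le]
      constructor <;> nlinarith [hω.1, hω.2]
    · exact measurableSet_le ((hπbm.sub hπm).abs.norm) measurable_const
  have hμ2' : MemLp (fun x => |μ1b x - μ1 x|) 2 (μ.map X) := by
    refine MemLp.abs ?_
    rw [memLp_map_measure_iff (g := fun x => μ1b x - μ1 x) (hμ1bm.sub hμ1m).aestronglyMeasurable hX.aemeasurable]
    exact hμ1bsq.sub hμ1sq
  have hCS : ∫ x, |πb x - π x| * |μ1b x - μ1 x| ∂(μ.map X)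
      ≤ Real.sqrt (∫ x, (πb x - π x) ^ 2 ∂(μ.map X))
        * Real.sqrt (∫ x, (μ1b x - μ1 x) ^ 2 ∂(μ.map X)) := by
    have hconj : Real.HolderConjugate 2 2 := by constructor <;> norm_num
    have h2 : (ENNReal.ofReal (2:ℝ)) = 2 := by norm_num
    have := integral_mul_le_Lp_mul_Lq_of_nonneg hconj
      (Filter.Eventually.of_forall fun x => abs_nonneg _)
      (Filter.Eventually.of_forall fun x => abs_nonneg _)
      (h2 ▸ hπ2') (h2 ▸ hμ2')
    have habs2 : ∀ a : ℝ, |a| ^ (2:ℝ) = a ^ 2 := fun a => by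
      rw [show ((2:ℝ)) = ((2:ℕ):ℝ) by norm_num, Real.rpow_natCast, sq_abs]
    have e1 : ∫ x, |πb x - π x| ^ (2:ℝ) ∂(μ.map X) = ∫ x, (πb x - π x) ^ 2 ∂(μ.map X) :=
      integral_congr_ae (Filter.Eventually.of_forall fun x => habs2 _)
    have e2 : ∫ x, |μ1b x - μ1 x| ^ (2:ℝ) ∂(μ.map X) = ∫ x, (μ1b x - μ1 x) ^ 2 ∂(μ.map X) :=
      integral_congr_ae (Filter.Eventually.of_forall fun x => habs2 _)
    rw [e1, e2] at this
    rw [Real.sqrt_eq_rpow, Real.sqrt_eq_rpow]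
    exact this
  have hmapint : ∫ ω, |πb (X ω) - π (X ω)| * |μ1b (X ω) - μ1 (X ω)| ∂μ
      = ∫ x, |πb x - π x| * |μ1b x - μ1 x| ∂(μ.map X) := by
    rw [integral_map (f := fun x => |πb x - π x| * |μ1b x - μ1 x|) hX.aemeasurable
      (((hπbm.sub hπm).abs.mul ((hμ1bm.sub hμ1m).abs)).aestronglyMeasurable)]
  calc |∫ ω, D ω ∂μ| ≤ ε⁻¹ * ∫ ω, |πb (X ω) - π (X ω)| * |μ1b (X ω) - μ1 (X ω)| ∂μ := hbound
    _ = ε⁻¹ * ∫ x, |πb x - π x| * |μ1b x - μ1 x| ∂(μ.map X) := by rw [hmapint]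
    _ ≤ ε⁻¹ * (Real.sqrt (∫ x, (πb x - π x) ^ 2 ∂(μ.map X))
        * Real.sqrt (∫ x, (μ1b x - μ1 x) ^ 2 ∂(μ.map X))) :=
        mul_le_mul_of_nonneg_left hCS (by positivity)
    _ = (1 / ε) * Real.sqrt (∫ x, (πb x - π x) ^ 2 ∂(μ.map X))
        * Real.sqrt (∫ x, (μ1b x - μ1 x) ^ 2 ∂(μ.map X)) := by rw [one_div]; ring
end

section
/- Let Z = (X, A, Y) with A ∈ {0,1}, Y integrable, propensity score π(X) = P(A=1 | X) with 0 < π(X) < 1 a.s., and μ_1(X) = E[Y | A=1, X]. Let π̄ and μ̄_1 be measurable functions with π̄ bounded away from 0 and suitable integrability. If either π̄ = π (P_X-a.s.) or μ̄_1 = μ_1 (P_X-a.s.), then E[ (A/π̄(X))·(Y − μ̄_1(X)) + μ̄_1(X) ] = E[ μ_1(X) ] = ψ_1. In particular (taking π̄ = π, μ̄_1 = μ_1), the influence function φ_1(Z) − ψ_1 = (A/π(X))(Y − μ_1(X)) + μ_1(X) − ψ_1 has mean zero. -/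
open MeasureTheory ProbabilityTheory

/-- Pull-out-and-integrate: `∫ G·f = ∫ G·E[f|m]` for `m`-measurable `G`. -/
private lemma aipw_aux_pull {Ω : Type*} {m0 : MeasurableSpace Ω} (ν : Measure Ω)
    [IsFiniteMeasure ν] {m : MeasurableSpace Ω} (hm : m ≤ m0) {G f : Ω → ℝ}
    (hG : StronglyMeasurable[m] G) (hGf : Integrable (fun ω => G ω * f ω) ν)
    (hf : Integrable f ν) :
    ∫ ω, G ω * f ω ∂ν = ∫ ω, G ω * (ν[f|m]) ω ∂ν := by
  have h1 : ∫ ω, G ω * f ω ∂ν = ∫ ω, (ν[G * f|m]) ω ∂ν := (integral_condExp hm).symm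
  have h2 : ν[G * f|m] =ᵐ[ν] G * ν[f|m] :=
    condExp_mul_of_stronglyMeasurable_left hG (by exact hGf) hf
  exact h1.trans (integral_congr_ae h2)

/-- **Double robustness of the AIPW functional for `ψ₁ = E[μ₁(X)]`.**
If either `π̄ = π` (`P_X`-a.s.) or `μ̄₁ = μ₁` (`P_X`-a.s.), then
`E[(A/π̄(X))(Y − μ̄₁(X)) + μ̄₁(X)] = E[μ₁(X)] = ψ₁`; in particular, taking
`π̄ = π` and `μ̄₁ = μ₁`, the influence function `φ₁(Z) − ψ₁` has mean zero. -/
theorem aipw_double_robustness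
    {Ω : Type*} [MeasurableSpace Ω]
    (μ : Measure Ω) [IsProbabilityMeasure μ]
    {β : Type*} [MeasurableSpace β]
    (X : Ω → β) (A Y : Ω → ℝ)
    (hX : Measurable X) (hA : Measurable A) (hY : Measurable Y)
    (hA01 : ∀ ω, A ω = 0 ∨ A ω = 1)
    (hYint : Integrable Y μ)
    -- propensity score: π ∘ X is a version of P(A = 1 | X), with 0 < π(X) < 1 a.s.
    (π : β → ℝ) (hπm : Measurable π)
    (hπver : (fun ω => π (X ω)) =ᵐ[μ] μ[A | MeasurableSpace.comap X inferInstance])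
    (hpos : ∀ᵐ ω ∂μ, 0 < π (X ω) ∧ π (X ω) < 1)
    -- outcome regression: μ₁ ∘ X is a version of E[Y | σ(X)] under μ restricted to {A = 1}
    (μ1 : β → ℝ) (hμ1m : Measurable μ1)
    (hμ1ver : (fun ω => μ1 (X ω)) =ᵐ[μ.restrict {ω | A ω = 1}]
      (μ.restrict {ω | A ω = 1})[Y | MeasurableSpace.comap X inferInstance])
    (hμ1int : Integrable (fun ω => μ1 (X ω)) μ)
    -- candidate nuisance functions: π̄ bounded away from 0, suitable integrability
    (πb μ1b : β → ℝ) (hπbm : Measurable πb) (hμ1bm : Measurable μ1b)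
    (ε : ℝ) (hε : 0 < ε) (hπblb : ∀ x, ε ≤ πb x)
    (hμ1bint : Integrable (fun ω => μ1b (X ω)) μ)
    (hφint : Integrable (fun ω => A ω / πb (X ω) * (Y ω - μ1b (X ω)) + μ1b (X ω)) μ)
    -- either the propensity model or the outcome model is correct
    (hdr : (∀ᵐ x ∂(μ.map X), πb x = π x) ∨ (∀ᵐ x ∂(μ.map X), μ1b x = μ1 x)) :
    ∫ ω, (A ω / πb (X ω) * (Y ω - μ1b (X ω)) + μ1b (X ω)) ∂μ
      = ∫ ω, μ1 (X ω) ∂μ := by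
  classical
  have hm : MeasurableSpace.comap X inferInstance ≤ ‹MeasurableSpace Ω› := hX.comap_le
  have hXm : Measurable[MeasurableSpace.comap X inferInstance] X :=
    Measurable.of_comap_le le_rfl
  have hmeas_comp : ∀ (g : β → ℝ), Measurable g →
      StronglyMeasurable[MeasurableSpace.comap X inferInstance] (fun ω => g (X ω)) :=
    fun g hg => Measurable.stronglyMeasurable (hg.comp hXm)
  -- basic bounds
  have hπb_pos : ∀ x, 0 < πb x := fun x => lt_of_lt_of_le hε (hπblb x)
  have hAbd : ∀ ω, ‖A ω‖ ≤ 1 := by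
    intro ω; rcases hA01 ω with h | h <;> simp [h]
  have hinv_bd : ∀ x, ‖(πb x)⁻¹‖ ≤ ε⁻¹ := by
    intro x
    rw [Real.norm_eq_abs, abs_of_pos (inv_pos.mpr (hπb_pos x))]
    exact inv_anti₀ hε (hπblb x)
  have hdivA_bd : ∀ ω, ‖A ω / πb (X ω)‖ ≤ ε⁻¹ := by
    intro ω
    rw [div_eq_mul_inv, norm_mul]
    calc ‖A ω‖ * ‖(πb (X ω))⁻¹‖ ≤ 1 * ε⁻¹ :=
          mul_le_mul (hAbd ω) (hinv_bd (X ω)) (norm_nonneg _) zero_le_one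
      _ = ε⁻¹ := one_mul _
  -- measurability helpers
  have hdivA_meas : AEStronglyMeasurable (fun ω => A ω / πb (X ω)) μ :=
    (hA.div ((hπbm.comp hX))).aestronglyMeasurable
  -- integrability of pieces
  have hAint : Integrable A μ :=
    Integrable.mono' (integrable_const 1) hA.aestronglyMeasurable (ae_of_all _ hAbd)
  have hT1 : Integrable (fun ω => A ω / πb (X ω) * Y ω) μ :=
    hYint.bdd_mul hdivA_meas (ae_of_all _ hdivA_bd)
  have hT1' : Integrable (fun ω => A ω / πb (X ω) * μ1 (X ω)) μ :=
    hμ1int.bdd_mul hdivA_meas (ae_of_all _ hdivA_bd)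
  have hT2 : Integrable (fun ω => A ω / πb (X ω) * μ1b (X ω)) μ :=
    hμ1bint.bdd_mul hdivA_meas (ae_of_all _ hdivA_bd)
  -- the set {A = 1}
  set s : Set Ω := {ω | A ω = 1} with hs_def
  have hs : MeasurableSet s := measurableSet_eq_fun hA measurable_const
  -- conversion between ∫ A/πb(X)·f dμ and ∫ πb(X)⁻¹·f d(μ.restrict s)
  have hconv : ∀ (f : Ω → ℝ),
      ∫ ω, A ω / πb (X ω) * f ω ∂μ = ∫ ω, (πb (X ω))⁻¹ * f ω ∂(μ.restrict s) := by
    intro f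
    rw [← integral_indicator hs]
    refine integral_congr_ae (Filter.Eventually.of_forall fun ω => ?_)
    by_cases hω : A ω = 1
    · simp only [Set.indicator_of_mem (show ω ∈ s from hω), hω]
      ring
    · have h0 : A ω = 0 := (hA01 ω).resolve_right hω
      simp only [Set.indicator_of_notMem (show ω ∉ s from hω), h0]
      ring
  -- step 1: replace Y by μ1(X) inside ∫ A/πb(X)·(·)
  have hYres : Integrable Y (μ.restrict s) := hYint.restrict
  have hGYres : Integrable (fun ω => (πb (X ω))⁻¹ * Y ω) (μ.restrict s) :=
    hYres.bdd_mul ((hπbm.comp hX).inv).aestronglyMeasurable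
      (ae_of_all _ fun ω => hinv_bd (X ω))
  have hstep1 : ∫ ω, A ω / πb (X ω) * Y ω ∂μ
      = ∫ ω, A ω / πb (X ω) * μ1 (X ω) ∂μ := by
    rw [hconv Y, hconv (fun ω => μ1 (X ω))]
    have h := aipw_aux_pull (μ.restrict s) hm
      (G := fun ω => (πb (X ω))⁻¹) (f := Y)
      (hmeas_comp (fun x => (πb x)⁻¹) hπbm.inv) hGYres hYres
    rw [h]
    refine integral_congr_ae ?_
    filter_upwards [hμ1ver] with ω hω
    rw [hω]
  -- step 2: E[G·A] = E[G·π(X)] for the X-measurable G below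
  have hG2sm : StronglyMeasurable[MeasurableSpace.comap X inferInstance]
      (fun ω => (πb (X ω))⁻¹ * (μ1 (X ω) - μ1b (X ω))) :=
    hmeas_comp (fun x => (πb x)⁻¹ * (μ1 x - μ1b x)) (hπbm.inv.mul (hμ1m.sub hμ1bm))
  have hG2int : Integrable (fun ω => (πb (X ω))⁻¹ * (μ1 (X ω) - μ1b (X ω))) μ :=
    (hμ1int.sub hμ1bint).bdd_mul ((hπbm.comp hX).inv).aestronglyMeasurable
      (ae_of_all _ fun ω => hinv_bd (X ω))
  have hG2A : Integrable
      (fun ω => (πb (X ω))⁻¹ * (μ1 (X ω) - μ1b (X ω)) * A ω) μ := by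
    have h := hG2int.bdd_mul hA.aestronglyMeasurable (ae_of_all _ hAbd)
    exact h.congr (Filter.Eventually.of_forall fun ω => mul_comm _ _)
  have hstep2 : ∫ ω, (πb (X ω))⁻¹ * (μ1 (X ω) - μ1b (X ω)) * A ω ∂μ
      = ∫ ω, (πb (X ω))⁻¹ * (μ1 (X ω) - μ1b (X ω)) * π (X ω) ∂μ := by
    have h := aipw_aux_pull μ hm
      (G := fun ω => (πb (X ω))⁻¹ * (μ1 (X ω) - μ1b (X ω))) (f := A)
      hG2sm hG2A hAint
    rw [h]
    refine integral_congr_ae ?_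
    filter_upwards [hπver] with ω hω
    rw [hω]
  -- decompose the AIPW integral
  have hφeq : ∫ ω, (A ω / πb (X ω) * (Y ω - μ1b (X ω)) + μ1b (X ω)) ∂μ
      = (∫ ω, A ω / πb (X ω) * Y ω ∂μ - ∫ ω, A ω / πb (X ω) * μ1b (X ω) ∂μ)
        + ∫ ω, μ1b (X ω) ∂μ := by
    have h0 : ∫ ω, (A ω / πb (X ω) * (Y ω - μ1b (X ω)) + μ1b (X ω)) ∂μ
        = ∫ ω, ((A ω / πb (X ω) * Y ω - A ω / πb (X ω) * μ1b (X ω)) + μ1b (X ω)) ∂μ :=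
      integral_congr_ae (Filter.Eventually.of_forall fun ω => by ring)
    have hsub : Integrable
        (fun ω => A ω / πb (X ω) * Y ω - A ω / πb (X ω) * μ1b (X ω)) μ := hT1.sub hT2
    rw [h0, integral_add hsub hμ1bint, integral_sub hT1 hT2]
  have hmerge : ∫ ω, A ω / πb (X ω) * μ1 (X ω) ∂μ
        - ∫ ω, A ω / πb (X ω) * μ1b (X ω) ∂μ
      = ∫ ω, (πb (X ω))⁻¹ * (μ1 (X ω) - μ1b (X ω)) * A ω ∂μ := by
    rw [← integral_sub hT1' hT2]
    refine integral_congr_ae (Filter.Eventually.of_forall fun ω => ?_)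
    ring
  rw [hφeq, hstep1, hmerge]
  rcases hdr with hdrπ | hdrμ
  · -- propensity model correct
    have haeπ : ∀ᵐ ω ∂μ, πb (X ω) = π (X ω) :=
      (ae_map_iff hX.aemeasurable (measurableSet_eq_fun hπbm hπm)).mp hdrπ
    have e3 : ∫ ω, (πb (X ω))⁻¹ * (μ1 (X ω) - μ1b (X ω)) * A ω ∂μ
        = ∫ ω, μ1 (X ω) ∂μ - ∫ ω, μ1b (X ω) ∂μ := by
      rw [hstep2, ← integral_sub hμ1int hμ1bint]
      refine integral_congr_ae ?_
      filter_upwards [haeπ] with ω hω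
      rw [← hω, mul_comm, ← mul_assoc, mul_inv_cancel₀ (ne_of_gt (hπb_pos (X ω))),
        one_mul]
    rw [e3]; ring
  · -- outcome model correct
    have haeμ : ∀ᵐ ω ∂μ, μ1b (X ω) = μ1 (X ω) :=
      (ae_map_iff hX.aemeasurable (measurableSet_eq_fun hμ1bm hμ1m)).mp hdrμ
    have e4 : ∫ ω, (πb (X ω))⁻¹ * (μ1 (X ω) - μ1b (X ω)) * A ω ∂μ = 0 := by
      refine integral_eq_zero_of_ae ?_
      filter_upwards [haeμ] with ω hω
      simp [hω]
    have e5 : ∫ ω, μ1b (X ω) ∂μ = ∫ ω, μ1 (X ω) ∂μ :=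
      integral_congr_ae (haeμ.mono fun ω hω => hω)
    rw [e4, e5]; ring
end

section
/- Let Z = (X, A, Y) with A ∈ {0,1} and Y integrable, true nuisances π(X) = P(A=1 | X) ∈ (0,1) a.s. and μ_a(X) = E[Y | A=a, X], and fixed measurable nuisance functions π̄ (with 0 < π̄ < 1, bounded away from 0 and 1) and μ̄_0, μ̄_1 with suitable integrability. Define φ^cate(Z; π̄, μ̄_0, μ̄_1) = μ̄_1(X) − μ̄_0(X) + (A − π̄(X))(Y − μ̄_A(X))/(π̄(X)(1 − π̄(X))), where μ̄_A = A μ̄_1 + (1−A) μ̄_0. If either π̄ = π a.s., or (μ̄_0, μ̄_1) = (μ_0, μ_1) a.s., then for any measurable function V of X, E[ φ^cate(Z; π̄, μ̄_0, μ̄_1) | V ] = E[ μ_1(X) − μ_0(X) | V ] almost surely. -/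
open MeasureTheory ProbabilityTheory

theorem dr_aux
    {Ω : Type*} {m0 : MeasurableSpace Ω}
    (μ : Measure Ω) [IsProbabilityMeasure μ]
    {β : Type*} [MeasurableSpace β]
    (X : Ω → β) (A Y : Ω → ℝ)
    (hX : Measurable X) (hA : Measurable A) (hY : Measurable Y)
    (hA01 : ∀ ω, A ω = 0 ∨ A ω = 1)
    (hYint : Integrable Y μ)
    (π : β → ℝ) (hπm : Measurable π)
    (hπver : (fun ω => π (X ω)) =ᵐ[μ] μ[A | MeasurableSpace.comap X inferInstance])
    (hpos : ∀ᵐ ω ∂μ, 0 < π (X ω) ∧ π (X ω) < 1)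
    (μ1 μ0 : β → ℝ) (hμ1m : Measurable μ1) (hμ0m : Measurable μ0)
    (hμ1ver : (fun ω => μ1 (X ω)) =ᵐ[μ.restrict {ω | A ω = 1}]
      (μ.restrict {ω | A ω = 1})[Y | MeasurableSpace.comap X inferInstance])
    (hμ0ver : (fun ω => μ0 (X ω)) =ᵐ[μ.restrict {ω | A ω = 0}]
      (μ.restrict {ω | A ω = 0})[Y | MeasurableSpace.comap X inferInstance])
    (hμ1int : Integrable (fun ω => μ1 (X ω)) μ)
    (hμ0int : Integrable (fun ω => μ0 (X ω)) μ)
    (πb μ1b μ0b : β → ℝ) (hπbm : Measurable πb)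
    (hμ1bm : Measurable μ1b) (hμ0bm : Measurable μ0b)
    (ε : ℝ) (hε : 0 < ε) (hπbbd : ∀ x, ε ≤ πb x ∧ πb x ≤ 1 - ε)
    (hμ1bint : Integrable (fun ω => μ1b (X ω)) μ)
    (hμ0bint : Integrable (fun ω => μ0b (X ω)) μ)
    (φ : Ω → ℝ)
    (hφ : ∀ ω, φ ω = μ1b (X ω) - μ0b (X ω)
      + (A ω - πb (X ω)) * (Y ω - (A ω * μ1b (X ω) + (1 - A ω) * μ0b (X ω)))
        / (πb (X ω) * (1 - πb (X ω))))
    (hdr : (∀ᵐ ω ∂μ, πb (X ω) = π (X ω))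
      ∨ ((∀ᵐ ω ∂μ, μ0b (X ω) = μ0 (X ω)) ∧ (∀ᵐ ω ∂μ, μ1b (X ω) = μ1 (X ω)))) :
    μ[φ | MeasurableSpace.comap X inferInstance]
      =ᵐ[μ] fun ω => μ1 (X ω) - μ0 (X ω) := by
  classical
  have hm : (MeasurableSpace.comap X inferInstance) ≤ m0 := hX.comap_le
  have hXm : Measurable[(MeasurableSpace.comap X inferInstance)] X := Measurable.of_comap_le le_rfl
  have hsm : ∀ (g : β → ℝ), Measurable g →
      StronglyMeasurable[(MeasurableSpace.comap X inferInstance)] (fun ω => g (X ω)) :=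
    fun g hg => (hg.comp hXm).stronglyMeasurable
  have hAbd : ∀ ω, |A ω| ≤ 1 := by
    intro ω; rcases hA01 ω with h | h <;> rw [h] <;> norm_num
  have h1Abd : ∀ ω, |1 - A ω| ≤ 1 := by
    intro ω; rcases hA01 ω with h | h <;> rw [h] <;> norm_num
  have hAint : Integrable A μ := by
    refine (integrable_const (1 : ℝ)).mono' hA.aestronglyMeasurable ?_
    exact ae_of_all _ fun ω => by simpa using hAbd ω
  have hπb0 : ∀ x, πb x ≠ 0 := fun x =>
    ne_of_gt (lt_of_lt_of_le hε (hπbbd x).1)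
  have hπb1 : ∀ x, 1 - πb x ≠ 0 := fun x =>
    ne_of_gt (by have := (hπbbd x).2; linarith)
  have hs1 : MeasurableSet[m0] {ω | A ω = 1} := hA (measurableSet_singleton 1)
  have hs0 : MeasurableSet[m0] {ω | A ω = 0} := hA (measurableSet_singleton 0)
  have hind1 : ∀ (f : Ω → ℝ) ω, A ω * f ω = Set.indicator {ω | A ω = 1} f ω := by
    intro f ω; rcases hA01 ω with h | h
    · rw [h, Set.indicator_of_notMem (by simp [Set.mem_setOf_eq, h]), zero_mul]
    · rw [h, Set.indicator_of_mem (by simp [Set.mem_setOf_eq, h]), one_mul]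
  have hind0 : ∀ (f : Ω → ℝ) ω, (1 - A ω) * f ω = Set.indicator {ω | A ω = 0} f ω := by
    intro f ω; rcases hA01 ω with h | h
    · rw [h, Set.indicator_of_mem (by simp [Set.mem_setOf_eq, h])]; ring
    · rw [h, Set.indicator_of_notMem (by simp [Set.mem_setOf_eq, h])]; ring
  -- bounded-multiplier integrability
  have hmulint : ∀ (c : ℝ) (f g : Ω → ℝ), AEStronglyMeasurable f μ → Integrable g μ →
      (∀ ω, |f ω| ≤ c) → Integrable (fun ω => f ω * g ω) μ := by
    intro c f g hf hg hb
    refine (hg.norm.const_mul c).mono' (hf.mul hg.aestronglyMeasurable)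
      (ae_of_all _ fun ω => ?_)
    simp only [norm_mul]
    exact mul_le_mul_of_nonneg_right (by simpa using hb ω) (norm_nonneg _)
  -- pull-out : E[A g(X) | m] = π(X) g(X)
  have hpull : ∀ (g : β → ℝ), Measurable g → Integrable (fun ω => g (X ω)) μ →
      μ[fun ω => A ω * g (X ω)|(MeasurableSpace.comap X inferInstance)] =ᵐ[μ] fun ω => π (X ω) * g (X ω) := by
    intro g hg hgint
    have h1 : (fun ω => A ω * g (X ω)) = (fun ω => g (X ω)) * A :=
      funext fun ω => mul_comm _ _
    have h2 : Integrable ((fun ω => g (X ω)) * A) μ := by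
      have := hmulint 1 A (fun ω => g (X ω)) hA.aestronglyMeasurable hgint hAbd
      rw [show (fun ω => g (X ω)) * A = fun ω => A ω * g (X ω) from funext fun ω => mul_comm _ _]; exact this
    rw [h1]
    refine (condExp_mul_of_stronglyMeasurable_left (hsm g hg) h2 hAint).trans ?_
    filter_upwards [hπver] with ω hω
    simp only [Pi.mul_apply]
    rw [← hω, mul_comm]
  have hpull0 : ∀ (g : β → ℝ), Measurable g → Integrable (fun ω => g (X ω)) μ →
      μ[fun ω => (1 - A ω) * g (X ω)|(MeasurableSpace.comap X inferInstance)] =ᵐ[μ] fun ω => (1 - π (X ω)) * g (X ω) := by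
    intro g hg hgint
    have h1 : (fun ω => (1 - A ω) * g (X ω))
        = (fun ω => g (X ω)) - fun ω => A ω * g (X ω) := funext fun ω => by
      simp only [Pi.sub_apply]; ring
    have h2 : Integrable (fun ω => A ω * g (X ω)) μ :=
      hmulint 1 A _ hA.aestronglyMeasurable hgint hAbd
    rw [h1]
    refine (condExp_sub hgint h2 _).trans ?_
    have h3 : μ[fun ω => g (X ω)|(MeasurableSpace.comap X inferInstance)] = fun ω => g (X ω) :=
      condExp_of_stronglyMeasurable hm (hsm g hg) hgint
    filter_upwards [hpull g hg hgint] with ω hω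
    simp only [Pi.sub_apply, h3, hω]
    ring
  -- conditional expectations of A*Y and (1-A)*Y
  have hAYint : Integrable (fun ω => A ω * Y ω) μ :=
    hmulint 1 A Y hA.aestronglyMeasurable hYint hAbd
  have h1AYint : Integrable (fun ω => (1 - A ω) * Y ω) μ :=
    hmulint 1 (fun ω => 1 - A ω) Y
      ((aestronglyMeasurable_const).sub hA.aestronglyMeasurable) hYint h1Abd
  have hAY : (fun ω => π (X ω) * μ1 (X ω)) =ᵐ[μ] μ[fun ω => A ω * Y ω|(MeasurableSpace.comap X inferInstance)] := by
    have hπμ1int : Integrable (fun ω => π (X ω) * μ1 (X ω)) μ := by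
      refine hμ1int.norm.mono'
        ((hπm.comp hX).mul (hμ1m.comp hX)).aestronglyMeasurable ?_
      filter_upwards [hpos] with ω hω
      simp only [norm_mul, norm_norm]
      calc ‖π (X ω)‖ * ‖μ1 (X ω)‖ ≤ 1 * ‖μ1 (X ω)‖ := by
            refine mul_le_mul_of_nonneg_right ?_ (norm_nonneg _)
            rw [Real.norm_eq_abs, abs_le]; constructor <;> linarith [hω.1, hω.2]
        _ = ‖μ1 (X ω)‖ := one_mul _
    refine ae_eq_condExp_of_forall_setIntegral_eq hm hAYint
      (fun s _ _ => hπμ1int.integrableOn) (fun s hs _ => ?_)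
      ((hsm _ (hπm.mul hμ1m)).aestronglyMeasurable)
    have hsΩ : MeasurableSet[m0] s := hm s hs
    have step1 : ∫ ω in s, π (X ω) * μ1 (X ω) ∂μ = ∫ ω in s, A ω * μ1 (X ω) ∂μ := by
      have hAμ1int : Integrable (fun ω => A ω * μ1 (X ω)) μ :=
        hmulint 1 A _ hA.aestronglyMeasurable hμ1int hAbd
      calc ∫ ω in s, π (X ω) * μ1 (X ω) ∂μ
          = ∫ ω in s, (μ[fun ω => A ω * μ1 (X ω)|(MeasurableSpace.comap X inferInstance)]) ω ∂μ := by
            refine setIntegral_congr_ae hsΩ ?_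
            filter_upwards [hpull μ1 hμ1m hμ1int] with ω hω _
            exact hω.symm
        _ = ∫ ω in s, A ω * μ1 (X ω) ∂μ := setIntegral_condExp hm hAμ1int hs
    have step2 : ∫ ω in s, A ω * μ1 (X ω) ∂μ = ∫ ω in s, A ω * Y ω ∂μ := by
      have e1 : ∫ ω in s, A ω * μ1 (X ω) ∂μ
          = ∫ ω in s, μ1 (X ω) ∂(μ.restrict {ω | A ω = 1}) := by
        rw [Measure.restrict_restrict hsΩ, ← setIntegral_indicator hs1]
        exact setIntegral_congr_ae hsΩ (ae_of_all _ fun ω _ => hind1 (fun ω => μ1 (X ω)) ω)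
      have e2 : ∫ ω in s, μ1 (X ω) ∂(μ.restrict {ω | A ω = 1})
          = ∫ ω in s, Y ω ∂(μ.restrict {ω | A ω = 1}) := by
        have hcongr : ∀ᵐ ω ∂(μ.restrict {ω | A ω = 1}),
            ω ∈ s → μ1 (X ω) = ((μ.restrict {ω | A ω = 1})[Y|(MeasurableSpace.comap X inferInstance)]) ω := by
          filter_upwards [hμ1ver] with ω hω _
          exact hω
        rw [setIntegral_congr_ae hsΩ hcongr]
        exact setIntegral_condExp hm (hYint.restrict) hs
      have e3 : ∫ ω in s, Y ω ∂(μ.restrict {ω | A ω = 1}) = ∫ ω in s, A ω * Y ω ∂μ := by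
        rw [Measure.restrict_restrict hsΩ, ← setIntegral_indicator hs1]
        exact (setIntegral_congr_ae hsΩ (ae_of_all _ fun ω _ => (hind1 (fun ω => Y ω) ω).symm))
      rw [e1, e2, e3]
    rw [step1, step2]
  have h1AY : (fun ω => (1 - π (X ω)) * μ0 (X ω)) =ᵐ[μ] μ[fun ω => (1 - A ω) * Y ω|(MeasurableSpace.comap X inferInstance)] := by
    have hπμ0int : Integrable (fun ω => (1 - π (X ω)) * μ0 (X ω)) μ := by
      refine hμ0int.norm.mono'
        (((measurable_const.sub (hπm.comp hX))).mul (hμ0m.comp hX)).aestronglyMeasurable ?_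
      filter_upwards [hpos] with ω hω
      simp only [norm_mul, norm_norm]
      calc ‖1 - π (X ω)‖ * ‖μ0 (X ω)‖ ≤ 1 * ‖μ0 (X ω)‖ := by
            refine mul_le_mul_of_nonneg_right ?_ (norm_nonneg _)
            rw [Real.norm_eq_abs, abs_le]; constructor <;> linarith [hω.1, hω.2]
        _ = ‖μ0 (X ω)‖ := one_mul _
    refine ae_eq_condExp_of_forall_setIntegral_eq hm h1AYint
      (fun s _ _ => hπμ0int.integrableOn) (fun s hs _ => ?_)
      ((hsm _ ((measurable_const.sub hπm).mul hμ0m)).aestronglyMeasurable)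
    have hsΩ : MeasurableSet[m0] s := hm s hs
    have step1 : ∫ ω in s, (1 - π (X ω)) * μ0 (X ω) ∂μ
        = ∫ ω in s, (1 - A ω) * μ0 (X ω) ∂μ := by
      have h1Aμ0int : Integrable (fun ω => (1 - A ω) * μ0 (X ω)) μ :=
        hmulint 1 (fun ω => 1 - A ω) _
          ((aestronglyMeasurable_const).sub hA.aestronglyMeasurable) hμ0int h1Abd
      calc ∫ ω in s, (1 - π (X ω)) * μ0 (X ω) ∂μ
          = ∫ ω in s, (μ[fun ω => (1 - A ω) * μ0 (X ω)|(MeasurableSpace.comap X inferInstance)]) ω ∂μ := by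
            refine setIntegral_congr_ae hsΩ ?_
            filter_upwards [hpull0 μ0 hμ0m hμ0int] with ω hω _
            exact hω.symm
        _ = ∫ ω in s, (1 - A ω) * μ0 (X ω) ∂μ := setIntegral_condExp hm h1Aμ0int hs
    have step2 : ∫ ω in s, (1 - A ω) * μ0 (X ω) ∂μ = ∫ ω in s, (1 - A ω) * Y ω ∂μ := by
      have e1 : ∫ ω in s, (1 - A ω) * μ0 (X ω) ∂μ
          = ∫ ω in s, μ0 (X ω) ∂(μ.restrict {ω | A ω = 0}) := by
        rw [Measure.restrict_restrict hsΩ, ← setIntegral_indicator hs0]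
        exact setIntegral_congr_ae hsΩ (ae_of_all _ fun ω _ => hind0 (fun ω => μ0 (X ω)) ω)
      have e2 : ∫ ω in s, μ0 (X ω) ∂(μ.restrict {ω | A ω = 0})
          = ∫ ω in s, Y ω ∂(μ.restrict {ω | A ω = 0}) := by
        have hcongr : ∀ᵐ ω ∂(μ.restrict {ω | A ω = 0}),
            ω ∈ s → μ0 (X ω) = ((μ.restrict {ω | A ω = 0})[Y|(MeasurableSpace.comap X inferInstance)]) ω := by
          filter_upwards [hμ0ver] with ω hω _
          exact hω
        rw [setIntegral_congr_ae hsΩ hcongr]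
        exact setIntegral_condExp hm (hYint.restrict) hs
      have e3 : ∫ ω in s, Y ω ∂(μ.restrict {ω | A ω = 0})
          = ∫ ω in s, (1 - A ω) * Y ω ∂μ := by
        rw [Measure.restrict_restrict hsΩ, ← setIntegral_indicator hs0]
        exact (setIntegral_congr_ae hsΩ (ae_of_all _ fun ω _ => (hind0 (fun ω => Y ω) ω).symm))
      rw [e1, e2, e3]
    rw [step1, step2]
  -- rewrite φ in a division-free form
  have hφfun : φ = (fun ω => μ1b (X ω) - μ0b (X ω))
      + ((fun ω => (πb (X ω))⁻¹ * (A ω * (Y ω - μ1b (X ω))))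
        - fun ω => ((1 : ℝ) - πb (X ω))⁻¹ * ((1 - A ω) * (Y ω - μ0b (X ω)))) := by
    funext ω
    simp only [Pi.add_apply, Pi.sub_apply]
    rw [hφ ω]
    rcases hA01 ω with h | h <;> rw [h] <;>
      field_simp [hπb0 (X ω), hπb1 (X ω)] <;> ring
  -- integrability of the pieces
  have hg1int : Integrable (fun ω => A ω * (Y ω - μ1b (X ω))) μ :=
    hmulint 1 A _ hA.aestronglyMeasurable (hYint.sub hμ1bint) hAbd
  have hg0int : Integrable (fun ω => (1 - A ω) * (Y ω - μ0b (X ω))) μ :=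
    hmulint 1 (fun ω => 1 - A ω) _
      ((aestronglyMeasurable_const).sub hA.aestronglyMeasurable) (hYint.sub hμ0bint) h1Abd
  have hw1bd : ∀ ω, |(πb (X ω))⁻¹| ≤ ε⁻¹ := by
    intro ω
    rw [abs_inv, abs_of_pos (lt_of_lt_of_le hε (hπbbd (X ω)).1)]
    exact inv_anti₀ hε (hπbbd (X ω)).1
  have hw0bd : ∀ ω, |((1 : ℝ) - πb (X ω))⁻¹| ≤ ε⁻¹ := by
    intro ω
    have h2 := (hπbbd (X ω)).2
    rw [abs_inv, abs_of_pos (by linarith : (0:ℝ) < 1 - πb (X ω))]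
    exact inv_anti₀ hε (by linarith)
  have hw1g1int : Integrable (fun ω => (πb (X ω))⁻¹ * (A ω * (Y ω - μ1b (X ω)))) μ :=
    hmulint ε⁻¹ _ _ ((hπbm.comp hX).inv).aestronglyMeasurable hg1int hw1bd
  have hw0g0int : Integrable
      (fun ω => ((1 : ℝ) - πb (X ω))⁻¹ * ((1 - A ω) * (Y ω - μ0b (X ω)))) μ :=
    hmulint ε⁻¹ _ _ ((measurable_const.sub (hπbm.comp hX)).inv).aestronglyMeasurable
      hg0int hw0bd
  -- conditional expectations of the pieces
  have hcg1 : μ[fun ω => A ω * (Y ω - μ1b (X ω))|(MeasurableSpace.comap X inferInstance)]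
      =ᵐ[μ] fun ω => π (X ω) * (μ1 (X ω) - μ1b (X ω)) := by
    have h1 : (fun ω => A ω * (Y ω - μ1b (X ω)))
        = (fun ω => A ω * Y ω) - fun ω => A ω * μ1b (X ω) := funext fun ω => by
      simp only [Pi.sub_apply]; ring
    have hAμ1bint : Integrable (fun ω => A ω * μ1b (X ω)) μ :=
      hmulint 1 A _ hA.aestronglyMeasurable hμ1bint hAbd
    rw [h1]
    refine (condExp_sub hAYint hAμ1bint _).trans ?_
    filter_upwards [hAY, hpull μ1b hμ1bm hμ1bint] with ω e1 e2
    simp only [Pi.sub_apply, ← e1, e2]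
    ring
  have hcg0 : μ[fun ω => (1 - A ω) * (Y ω - μ0b (X ω))|(MeasurableSpace.comap X inferInstance)]
      =ᵐ[μ] fun ω => (1 - π (X ω)) * (μ0 (X ω) - μ0b (X ω)) := by
    have h1 : (fun ω => (1 - A ω) * (Y ω - μ0b (X ω)))
        = (fun ω => (1 - A ω) * Y ω) - fun ω => (1 - A ω) * μ0b (X ω) :=
      funext fun ω => by simp only [Pi.sub_apply]; ring
    have h1Aμ0bint : Integrable (fun ω => (1 - A ω) * μ0b (X ω)) μ :=
      hmulint 1 (fun ω => 1 - A ω) _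
        ((aestronglyMeasurable_const).sub hA.aestronglyMeasurable) hμ0bint h1Abd
    rw [h1]
    refine (condExp_sub h1AYint h1Aμ0bint _).trans ?_
    filter_upwards [h1AY, hpull0 μ0b hμ0bm hμ0bint] with ω e1 e2
    simp only [Pi.sub_apply, ← e1, e2]
    ring
  have hcw1 : μ[fun ω => (πb (X ω))⁻¹ * (A ω * (Y ω - μ1b (X ω)))|(MeasurableSpace.comap X inferInstance)]
      =ᵐ[μ] fun ω => (πb (X ω))⁻¹ * (π (X ω) * (μ1 (X ω) - μ1b (X ω))) := by
    have h := condExp_mul_of_stronglyMeasurable_left (μ := μ)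
      (hsm _ hπbm.inv) (by exact hw1g1int) hg1int
    refine h.trans ?_
    filter_upwards [hcg1] with ω hω
    simp only [Pi.mul_apply, Pi.inv_apply, hω]
  have hcw0 : μ[fun ω => ((1 : ℝ) - πb (X ω))⁻¹ * ((1 - A ω) * (Y ω - μ0b (X ω)))|(MeasurableSpace.comap X inferInstance)]
      =ᵐ[μ] fun ω => ((1 : ℝ) - πb (X ω))⁻¹ * ((1 - π (X ω)) * (μ0 (X ω) - μ0b (X ω))) := by
    have h := condExp_mul_of_stronglyMeasurable_left (μ := μ)
      (hsm _ (measurable_const.sub hπbm).inv) (by exact hw0g0int) hg0int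
    refine h.trans ?_
    filter_upwards [hcg0] with ω hω
    simp only [Pi.mul_apply, Pi.inv_apply, Pi.sub_apply, hω]
  -- assemble
  have hbint : Integrable (fun ω => μ1b (X ω) - μ0b (X ω)) μ := hμ1bint.sub hμ0bint
  have hcb : μ[fun ω => μ1b (X ω) - μ0b (X ω)|(MeasurableSpace.comap X inferInstance)] = fun ω => μ1b (X ω) - μ0b (X ω) :=
    condExp_of_stronglyMeasurable hm ((hsm _ hμ1bm).sub (hsm _ hμ0bm)) hbint
  rw [hφfun]
  have hsum := condExp_add (μ := μ) (m := (MeasurableSpace.comap X inferInstance)) hbint (hw1g1int.sub hw0g0int)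
  have hdiff := condExp_sub (μ := μ) (m := (MeasurableSpace.comap X inferInstance)) hw1g1int hw0g0int
  refine hsum.trans ?_
  have hmain : (μ[fun ω => μ1b (X ω) - μ0b (X ω)|(MeasurableSpace.comap X inferInstance)]
      + μ[(fun ω => (πb (X ω))⁻¹ * (A ω * (Y ω - μ1b (X ω))))
        - fun ω => ((1 : ℝ) - πb (X ω))⁻¹ * ((1 - A ω) * (Y ω - μ0b (X ω)))|(MeasurableSpace.comap X inferInstance)])
      =ᵐ[μ] fun ω => (μ1b (X ω) - μ0b (X ω))
        + ((πb (X ω))⁻¹ * (π (X ω) * (μ1 (X ω) - μ1b (X ω)))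
          - ((1 : ℝ) - πb (X ω))⁻¹ * ((1 - π (X ω)) * (μ0 (X ω) - μ0b (X ω)))) := by
    filter_upwards [hdiff, hcw1, hcw0] with ω h1 h2 h3
    simp only [Pi.add_apply, hcb, Pi.sub_apply] at h1 ⊢
    rw [h1, h2, h3]
  refine hmain.trans ?_
  -- use the double-robustness hypothesis
  rcases hdr with hπeq | ⟨h0eq, h1eq⟩
  · filter_upwards [hπeq] with ω hω
    rw [← hω]
    field_simp [hπb0 (X ω), hπb1 (X ω)]
    ring
  · filter_upwards [h0eq, h1eq] with ω h0 h1
    rw [h0, h1]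
    ring

/-- **Double robustness of the DR-Learner pseudo-outcome.**
With `φᶜᵃᵗᵉ(Z; π̄, μ̄₀, μ̄₁) = μ̄₁(X) − μ̄₀(X) + (A − π̄(X))(Y − μ̄_A(X))/(π̄(X)(1 − π̄(X)))`,
if either `π̄ = π` a.s. or `(μ̄₀, μ̄₁) = (μ₀, μ₁)` a.s., then for any measurable function
`V` of `X`, `E[φᶜᵃᵗᵉ(Z; π̄, μ̄₀, μ̄₁) | V] = E[μ₁(X) − μ₀(X) | V]` almost surely. -/
theorem pseudo_outcome_double_robustness
    {Ω : Type*} [MeasurableSpace Ω]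
    (μ : Measure Ω) [IsProbabilityMeasure μ]
    {β : Type*} [MeasurableSpace β]
    (X : Ω → β) (A Y : Ω → ℝ)
    (hX : Measurable X) (hA : Measurable A) (hY : Measurable Y)
    (hA01 : ∀ ω, A ω = 0 ∨ A ω = 1)
    (hYint : Integrable Y μ)
    -- true propensity score with 0 < π(X) < 1 a.s.
    (π : β → ℝ) (hπm : Measurable π)
    (hπver : (fun ω => π (X ω)) =ᵐ[μ] μ[A | MeasurableSpace.comap X inferInstance])
    (hpos : ∀ᵐ ω ∂μ, 0 < π (X ω) ∧ π (X ω) < 1)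
    -- true outcome regressions μₐ(X) = E[Y | A = a, X]
    (μ1 μ0 : β → ℝ) (hμ1m : Measurable μ1) (hμ0m : Measurable μ0)
    (hμ1ver : (fun ω => μ1 (X ω)) =ᵐ[μ.restrict {ω | A ω = 1}]
      (μ.restrict {ω | A ω = 1})[Y | MeasurableSpace.comap X inferInstance])
    (hμ0ver : (fun ω => μ0 (X ω)) =ᵐ[μ.restrict {ω | A ω = 0}]
      (μ.restrict {ω | A ω = 0})[Y | MeasurableSpace.comap X inferInstance])
    (hμ1int : Integrable (fun ω => μ1 (X ω)) μ)
    (hμ0int : Integrable (fun ω => μ0 (X ω)) μ)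
    -- fixed candidate nuisance functions, π̄ bounded away from 0 and 1
    (πb μ1b μ0b : β → ℝ) (hπbm : Measurable πb)
    (hμ1bm : Measurable μ1b) (hμ0bm : Measurable μ0b)
    (ε : ℝ) (hε : 0 < ε) (hπbbd : ∀ x, ε ≤ πb x ∧ πb x ≤ 1 - ε)
    (hμ1bint : Integrable (fun ω => μ1b (X ω)) μ)
    (hμ0bint : Integrable (fun ω => μ0b (X ω)) μ)
    -- the pseudo-outcome with candidate nuisances, μ̄_A = A μ̄₁ + (1 − A) μ̄₀
    (φ : Ω → ℝ)
    (hφ : ∀ ω, φ ω = μ1b (X ω) - μ0b (X ω)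
      + (A ω - πb (X ω)) * (Y ω - (A ω * μ1b (X ω) + (1 - A ω) * μ0b (X ω)))
        / (πb (X ω) * (1 - πb (X ω))))
    (hφint : Integrable φ μ)
    -- either the propensity model or both outcome models are correct
    (hdr : (∀ᵐ ω ∂μ, πb (X ω) = π (X ω))
      ∨ ((∀ᵐ ω ∂μ, μ0b (X ω) = μ0 (X ω)) ∧ (∀ᵐ ω ∂μ, μ1b (X ω) = μ1 (X ω))))
    -- V is any measurable function of X
    {γ : Type*} [MeasurableSpace γ] (V : β → γ) (hV : Measurable V) :
    μ[φ | MeasurableSpace.comap (fun ω => V (X ω)) inferInstance]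
      =ᵐ[μ]
    μ[fun ω => μ1 (X ω) - μ0 (X ω)
        | MeasurableSpace.comap (fun ω => V (X ω)) inferInstance] := by
  have key := dr_aux μ X A Y hX hA hY hA01 hYint π hπm hπver hpos
    μ1 μ0 hμ1m hμ0m hμ1ver hμ0ver hμ1int hμ0int
    πb μ1b μ0b hπbm hμ1bm hμ0bm ε hε hπbbd hμ1bint hμ0bint φ hφ hdr
  have hm : MeasurableSpace.comap X inferInstance ≤ ‹MeasurableSpace Ω› := hX.comap_le
  have hmV : MeasurableSpace.comap (fun ω => V (X ω)) inferInstance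
      ≤ MeasurableSpace.comap X inferInstance := by
    have h1 : (fun ω => V (X ω)) = V ∘ X := rfl
    rw [h1, ← MeasurableSpace.comap_comp]
    exact MeasurableSpace.comap_mono hV.comap_le
  calc μ[φ | MeasurableSpace.comap (fun ω => V (X ω)) inferInstance]
      =ᵐ[μ] μ[μ[φ | MeasurableSpace.comap X inferInstance]
        | MeasurableSpace.comap (fun ω => V (X ω)) inferInstance] :=
        (condExp_condExp_of_le hmV hm).symm
    _ =ᵐ[μ] μ[fun ω => μ1 (X ω) - μ0 (X ω)
        | MeasurableSpace.comap (fun ω => V (X ω)) inferInstance] :=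
        condExp_congr_ae key
end

section
/- Let Z = (X, A, Y) with A ∈ {0,1}, Y integrable, π_a(X) = P(A=a | X) ∈ (0,1) a.s., μ_a(X) = E[Y | A=a, X], and let π̄_a, μ̄_a be fixed measurable functions with π̄_a bounded away from 0 and suitable integrability. Then for each a ∈ {0,1} and any measurable function V of X, almost surely E[ 1{A=a}·(Y − μ̄_a(X))/π̄_a(X) + μ̄_a(X) − μ_a(X) | V ] = E[ ( μ̄_a(X) − μ_a(X) )·( 1 − π_a(X)/π̄_a(X) ) | V ]. -/
open MeasureTheory ProbabilityTheory

/-- **Conditional bias of the arm-specific AIPW pseudo-outcome.**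
For each `a ∈ {0,1}` and any measurable function `V` of `X`, almost surely
`E[1{A=a}(Y − μ̄ₐ(X))/π̄ₐ(X) + μ̄ₐ(X) − μₐ(X) | V]
  = E[(μ̄ₐ(X) − μₐ(X))(1 − πₐ(X)/π̄ₐ(X)) | V]`. -/
theorem aipw_conditional_bias
    {Ω : Type*} [MeasurableSpace Ω]
    (μ : Measure Ω) [IsProbabilityMeasure μ]
    {β : Type*} [MeasurableSpace β]
    (X : Ω → β) (A Y : Ω → ℝ)
    (hX : Measurable X) (hA : Measurable A) (hY : Measurable Y)
    (hA01 : ∀ ω, A ω = 0 ∨ A ω = 1)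
    (hYint : Integrable Y μ)
    -- treatment level a ∈ {0,1}
    (a : ℝ) (ha : a = 0 ∨ a = 1)
    -- πₐ(X) = P(A = a | X), with 0 < πₐ(X) < 1 a.s.
    (πa : β → ℝ) (hπam : Measurable πa)
    (hπaver : (fun ω => πa (X ω)) =ᵐ[μ]
      μ[fun ω => if A ω = a then (1 : ℝ) else 0 | MeasurableSpace.comap X inferInstance])
    (hpos : ∀ᵐ ω ∂μ, 0 < πa (X ω) ∧ πa (X ω) < 1)
    -- true outcome regression μₐ(X) = E[Y | A = a, X]
    (μa : β → ℝ) (hμam : Measurable μa)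
    (hμaver : (fun ω => μa (X ω)) =ᵐ[μ.restrict {ω | A ω = a}]
      (μ.restrict {ω | A ω = a})[Y | MeasurableSpace.comap X inferInstance])
    (hμaint : Integrable (fun ω => μa (X ω)) μ)
    -- fixed candidate nuisance functions, π̄ₐ bounded away from 0, suitable integrability
    (πab μab : β → ℝ) (hπabm : Measurable πab) (hμabm : Measurable μab)
    (ε : ℝ) (hε : 0 < ε) (hπablb : ∀ x, ε ≤ πab x)
    (hμabint : Integrable (fun ω => μab (X ω)) μ)
    (hLint : Integrable (fun ω =>
      (if A ω = a then (1 : ℝ) else 0) * (Y ω - μab (X ω)) / πab (X ω)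
        + μab (X ω) - μa (X ω)) μ)
    (hRint : Integrable (fun ω =>
      (μab (X ω) - μa (X ω)) * (1 - πa (X ω) / πab (X ω))) μ)
    -- V is any measurable function of X
    {γ : Type*} [MeasurableSpace γ] (V : β → γ) (hV : Measurable V) :
    μ[fun ω => (if A ω = a then (1 : ℝ) else 0) * (Y ω - μab (X ω)) / πab (X ω)
          + μab (X ω) - μa (X ω)
        | MeasurableSpace.comap (fun ω => V (X ω)) inferInstance]
      =ᵐ[μ]
    μ[fun ω => (μab (X ω) - μa (X ω)) * (1 - πa (X ω) / πab (X ω))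
        | MeasurableSpace.comap (fun ω => V (X ω)) inferInstance] := by
  have hmX : MeasurableSpace.comap X inferInstance ≤ (inferInstance : MeasurableSpace Ω) :=
    hX.comap_le
  have hXmX : @Measurable Ω β (MeasurableSpace.comap X inferInstance) _ X :=
    Measurable.of_comap_le le_rfl
  have hmVX : MeasurableSpace.comap (fun ω => V (X ω)) inferInstance
      ≤ MeasurableSpace.comap X inferInstance :=
    Measurable.comap_le (hV.comp hXmX)
  have hSmeas : MeasurableSet {ω | A ω = a} := hA (measurableSet_singleton a)
  have hindeq : (fun ω => if A ω = a then (1 : ℝ) else 0)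
      = Set.indicator {ω | A ω = a} (fun _ => (1 : ℝ)) := by
    funext ω; by_cases h : A ω = a <;> simp [Set.indicator, h]
  have hindm : Measurable (fun ω => if A ω = a then (1 : ℝ) else 0) := by
    rw [hindeq]; exact measurable_const.indicator hSmeas
  have hindbd : ∃ C, ∀ ω, ‖(if A ω = a then (1 : ℝ) else 0)‖ ≤ C := by
    refine ⟨1, fun ω => ?_⟩; by_cases h : A ω = a <;> simp [h]
  have hindint : Integrable (fun ω => if A ω = a then (1 : ℝ) else 0) μ := by
    rw [hindeq]; exact (integrable_const (1 : ℝ)).indicator hSmeas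
  have smX : ∀ (f : β → ℝ), Measurable f →
      StronglyMeasurable[MeasurableSpace.comap X inferInstance] (fun ω => f (X ω)) :=
    fun f hf => (hf.comp hXmX).stronglyMeasurable
  have hIY : Integrable (fun ω => (if A ω = a then (1 : ℝ) else 0) * Y ω) μ :=
    hYint.bdd_mul hindm.aestronglyMeasurable (Filter.Eventually.of_forall hindbd.choose_spec)
  have hIμa : Integrable (fun ω => (if A ω = a then (1 : ℝ) else 0) * μa (X ω)) μ :=
    hμaint.bdd_mul hindm.aestronglyMeasurable (Filter.Eventually.of_forall hindbd.choose_spec)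
  have hIμab : Integrable (fun ω => (if A ω = a then (1 : ℝ) else 0) * μab (X ω)) μ :=
    hμabint.bdd_mul hindm.aestronglyMeasurable (Filter.Eventually.of_forall hindbd.choose_spec)
  have hπabpos : ∀ x, 0 < πab x := fun x => lt_of_lt_of_le hε (hπablb x)
  have hcbd : ∃ C, ∀ ω, ‖(πab (X ω))⁻¹‖ ≤ C := by
    refine ⟨ε⁻¹, fun ω => ?_⟩
    rw [Real.norm_eq_abs, abs_of_pos (inv_pos.mpr (hπabpos (X ω)))]
    exact inv_anti₀ hε (hπablb (X ω))
  have hcm : Measurable (fun ω => (πab (X ω))⁻¹) := (hπabm.comp hX).inv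
  haveI : SigmaFinite (μ.trim hmX) := by
    have : IsFiniteMeasure (μ.trim hmX) := isFiniteMeasure_trim hmX
    infer_instance
  have hcore : ∀ s : Set Ω, MeasurableSet[MeasurableSpace.comap X inferInstance] s →
      ∫ ω in s, (if A ω = a then (1 : ℝ) else 0) * μa (X ω) ∂μ
        = ∫ ω in s, (if A ω = a then (1 : ℝ) else 0) * Y ω ∂μ := by
    intro s hs
    have hs' : MeasurableSet s := hmX s hs
    have hrw : ∀ (f : Ω → ℝ), ∫ ω in s, (if A ω = a then (1 : ℝ) else 0) * f ω ∂μ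
        = ∫ ω in s, f ω ∂(μ.restrict {ω | A ω = a}) := by
      intro f
      rw [Measure.restrict_restrict hs', ← setIntegral_indicator hSmeas]
      congr 1
      funext ω
      by_cases h : A ω = a <;> simp [Set.indicator, h]
    rw [hrw, hrw]
    haveI : SigmaFinite ((μ.restrict {ω | A ω = a}).trim hmX) := by
      have : IsFiniteMeasure ((μ.restrict {ω | A ω = a}).trim hmX) := isFiniteMeasure_trim hmX
      infer_instance
    have h1 : ∫ ω in s, μa (X ω) ∂(μ.restrict {ω | A ω = a})
        = ∫ ω in s, ((μ.restrict {ω | A ω = a})[Y | MeasurableSpace.comap X inferInstance]) ω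
            ∂(μ.restrict {ω | A ω = a}) :=
      setIntegral_congr_ae hs' (hμaver.mono fun ω h _ => h)
    rw [h1, setIntegral_condExp hmX hYint.restrict hs]
  have h1 : μ[fun ω => (if A ω = a then (1 : ℝ) else 0) * Y ω
        | MeasurableSpace.comap X inferInstance]
      =ᵐ[μ] μ[fun ω => (if A ω = a then (1 : ℝ) else 0) * μa (X ω)
        | MeasurableSpace.comap X inferInstance] := by
    refine (ae_eq_condExp_of_forall_setIntegral_eq hmX hIY
      (fun s hs _ => integrable_condExp.integrableOn)
      (fun s hs _ => ?_)
      stronglyMeasurable_condExp.aestronglyMeasurable).symm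
    rw [setIntegral_condExp hmX hIμa hs]
    exact hcore s hs
  have hpull : ∀ (f : β → ℝ), Measurable f → Integrable (fun ω => f (X ω)) μ →
      Integrable (fun ω => (if A ω = a then (1 : ℝ) else 0) * f (X ω)) μ →
      μ[fun ω => (if A ω = a then (1 : ℝ) else 0) * f (X ω)
          | MeasurableSpace.comap X inferInstance]
        =ᵐ[μ] fun ω => f (X ω) * πa (X ω) := by
    intro f hf hfint hprod
    have heq : (fun ω => (if A ω = a then (1 : ℝ) else 0) * f (X ω))
        = (fun ω => f (X ω)) * (fun ω => if A ω = a then (1 : ℝ) else 0) := by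
      funext ω; simp [mul_comm]
    have hm := condExp_mul_of_stronglyMeasurable_left (μ := μ) (smX f hf)
      (g := fun ω => if A ω = a then (1 : ℝ) else 0)
      (by rw [← heq]; exact hprod) hindint
    rw [heq]
    refine hm.trans ?_
    filter_upwards [hπaver] with ω hω
    simp only [Pi.mul_apply]
    rw [← hω]
  have h2 := hpull μa hμam hμaint hIμa
  have h3 := hpull μab hμabm hμabint hIμab
  have hIg1 : Integrable (fun ω => (πab (X ω))⁻¹
      * ((if A ω = a then (1 : ℝ) else 0) * Y ω)) μ :=
    hIY.bdd_mul hcm.aestronglyMeasurable (Filter.Eventually.of_forall hcbd.choose_spec)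
  have hIg2 : Integrable (fun ω => (πab (X ω))⁻¹
      * ((if A ω = a then (1 : ℝ) else 0) * μab (X ω))) μ :=
    hIμab.bdd_mul hcm.aestronglyMeasurable (Filter.Eventually.of_forall hcbd.choose_spec)
  have hIg3 : Integrable (fun ω => μab (X ω) - μa (X ω)) μ := hμabint.sub hμaint
  have hLeq : (fun ω => (if A ω = a then (1 : ℝ) else 0) * (Y ω - μab (X ω)) / πab (X ω)
      + μab (X ω) - μa (X ω))
      = fun ω => ((πab (X ω))⁻¹ * ((if A ω = a then (1 : ℝ) else 0) * Y ω)
          - (πab (X ω))⁻¹ * ((if A ω = a then (1 : ℝ) else 0) * μab (X ω)))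
          + (μab (X ω) - μa (X ω)) := by
    funext ω
    have hne := (hπabpos (X ω)).ne'
    by_cases h : A ω = a <;> simp [h] <;> field_simp <;> ring
  have hpullc : ∀ (g : Ω → ℝ), Integrable g μ →
      Integrable (fun ω => (πab (X ω))⁻¹ * g ω) μ →
      μ[fun ω => (πab (X ω))⁻¹ * g ω | MeasurableSpace.comap X inferInstance]
        =ᵐ[μ] fun ω => (πab (X ω))⁻¹
          * (μ[g | MeasurableSpace.comap X inferInstance]) ω := by
    intro g hg hcg
    exact condExp_mul_of_stronglyMeasurable_left (μ := μ) (smX (fun x => (πab x)⁻¹) hπabm.inv) hcg hg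
  have hg1c : μ[fun ω => (πab (X ω))⁻¹ * ((if A ω = a then (1 : ℝ) else 0) * Y ω)
        | MeasurableSpace.comap X inferInstance]
      =ᵐ[μ] fun ω => (πab (X ω))⁻¹ * (μa (X ω) * πa (X ω)) := by
    refine (hpullc _ hIY hIg1).trans ?_
    filter_upwards [h1, h2] with ω hω1 hω2
    rw [hω1, hω2]
  have hg2c : μ[fun ω => (πab (X ω))⁻¹ * ((if A ω = a then (1 : ℝ) else 0) * μab (X ω))
        | MeasurableSpace.comap X inferInstance]
      =ᵐ[μ] fun ω => (πab (X ω))⁻¹ * (μab (X ω) * πa (X ω)) := by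
    refine (hpullc _ hIμab hIg2).trans ?_
    filter_upwards [h3] with ω hω
    rw [hω]
  have hg3c : μ[fun ω => μab (X ω) - μa (X ω) | MeasurableSpace.comap X inferInstance]
      =ᵐ[μ] fun ω => μab (X ω) - μa (X ω) := by
    rw [condExp_of_stronglyMeasurable hmX (smX (fun x => μab x - μa x) (hμabm.sub hμam)) hIg3]
  have key : μ[fun ω => (if A ω = a then (1 : ℝ) else 0) * (Y ω - μab (X ω)) / πab (X ω)
        + μab (X ω) - μa (X ω) | MeasurableSpace.comap X inferInstance]
      =ᵐ[μ] fun ω => (μab (X ω) - μa (X ω)) * (1 - πa (X ω) / πab (X ω)) := by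
    rw [hLeq]
    have e1 := condExp_add (μ := μ) (m := MeasurableSpace.comap X inferInstance)
      (hIg1.sub hIg2) hIg3
    have e2 := condExp_sub (μ := μ) (m := MeasurableSpace.comap X inferInstance) hIg1 hIg2
    refine e1.trans ?_
    filter_upwards [e2, hg1c, hg2c, hg3c] with ω he2 hω1 hω2 hω3
    simp only [Pi.add_apply, Pi.sub_apply] at *
    rw [he2, hω1, hω2, hω3]
    have := (hπabpos (X ω)).ne'
    field_simp
    ring
  have tower := condExp_condExp_of_le (μ := μ)
    (f := fun ω => (if A ω = a then (1 : ℝ) else 0) * (Y ω - μab (X ω)) / πab (X ω)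
        + μab (X ω) - μa (X ω)) hmVX hmX
  exact tower.symm.trans (condExp_congr_ae key)
end

section
/- Let V_1 be a real random variable, let h > 0, v_1^0 ∈ ℝ, let K be a bounded nonnegative kernel, K_{h,v_1^0}(v_1) = (1/h)K((v_1 − v_1^0)/h), and let g_{h,v_1^0,j}(v_1) = (1, (v_1−v_1^0)/h, …, ((v_1−v_1^0)/h)^j)ᵀ be the degree-j local polynomial basis. Suppose the matrix D_{h,v_1^0,j} = E[ g_{h,v_1^0,j}(V_1) g_{h,v_1^0,j}(V_1)ᵀ K_{h,v_1^0}(V_1) ] is invertible. Let φ^cate(Z) be a square-integrable pseudo-outcome with E[φ^cate(Z) | V_1] = τ_1(V_1). Define, for b > 0 with D_{b,v_1^0,3} invertible and c_2 = ∫ u² K(u) du, Γ_{h,b,v_1^0}(v_1) = e_1ᵀ D_{h,v_1^0,1}^{-1} g_{h,v_1^0,1}(v_1) K_{h,v_1^0}(v_1) − c_2 h² b^{−2} e_3ᵀ D_{b,v_1^0,3}^{-1} g_{b,v_1^0,3}(v_1) K_{b,v_1^0}(v_1), and γ^cate_{h,b,v_1^0}(V_1) as in Theorem 1 of the paper. Then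 the influence function φ^cate_{h,b,v_1^0}(Z) = Γ_{h,b,v_1^0}(V_1)·φ^cate(Z) − γ^cate_{h,b,v_1^0}(V_1) has mean zero: E[ Γ_{h,b,v_1^0}(V_1) φ^cate(Z) ] = E[ γ^cate_{h,b,v_1^0}(V_1) ] = τ_{h,b}(v_1^0) := E[ Γ_{h,b,v_1^0}(V_1) τ_1(V_1) ]. -/
open MeasureTheory ProbabilityTheory Matrix

lemma integral_fintype_sum_mul' {Ω : Type*} [MeasurableSpace Ω] (μ : Measure Ω)
    {ι : Type*} [Fintype ι] (c : ι → ℝ) (f : ι → Ω → ℝ)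
    (hf : ∀ i, Integrable (f i) μ) :
    ∫ ω, ∑ i, c i * f i ω ∂μ = ∑ i, c i * ∫ ω, f i ω ∂μ := by
  rw [integral_finset_sum _ (fun i _ => (hf i).const_mul (c i))]
  exact Finset.sum_congr rfl fun i _ => integral_const_mul _ _

lemma expand_quadratic {n : ℕ} (a e g : Fin n → ℝ) (Kv C : ℝ) :
    C * ((∑ j, a j * g j) * Kv * (∑ k, g k * e k))
      = ∑ p : Fin n × Fin n, (C * (a p.1 * e p.2)) * (g p.1 * g p.2 * Kv) := by
  rw [Fintype.sum_prod_type]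
  simp only [Finset.sum_mul, Finset.mul_sum]
  rw [Finset.sum_comm]
  exact Finset.sum_congr rfl fun j _ => Finset.sum_congr rfl fun k _ => by ring

/-- **The influence function of the debiased local-linear smoothed CATE has mean zero
(Theorem 1).** With `φᶜᵃᵗᵉ_{h,b,v₁⁰}(Z) = Γ_{h,b,v₁⁰}(V₁)·φᶜᵃᵗᵉ(Z) − γᶜᵃᵗᵉ_{h,b,v₁⁰}(V₁)`,
`E[Γ_{h,b,v₁⁰}(V₁) φᶜᵃᵗᵉ(Z)] = E[γᶜᵃᵗᵉ_{h,b,v₁⁰}(V₁)] = τ_{h,b}(v₁⁰) = E[Γ_{h,b,v₁⁰}(V₁) τ₁(V₁)]`. -/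
theorem local_linear_influence_function_mean_zero
    {Ω : Type*} [MeasurableSpace Ω]
    (μ : Measure Ω) [IsProbabilityMeasure μ]
    (V1 : Ω → ℝ) (hV1 : Measurable V1)
    -- square-integrable pseudo-outcome with E[φ | V₁] = τ₁(V₁)
    (φ : Ω → ℝ) (hφ2 : MemLp φ 2 μ)
    (τ1 : ℝ → ℝ) (hτ1m : Measurable τ1)
    (hτ1ver : (fun ω => τ1 (V1 ω)) =ᵐ[μ] μ[φ | MeasurableSpace.comap V1 inferInstance])
    -- bounded nonnegative kernel
    (K : ℝ → ℝ) (hKm : Measurable K) (hK0 : ∀ u, 0 ≤ K u) (hKbd : ∃ C, ∀ u, K u ≤ C)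
    -- bandwidths and evaluation point
    (h b : ℝ) (hh : 0 < h) (hb : 0 < b) (v0 : ℝ)
    (c2 : ℝ) (hc2 : c2 = ∫ u, u ^ 2 * K u)
    -- localized kernels K_{h,v₁⁰} and local polynomial bases g_{h,v₁⁰,j}
    (Kh Kb : ℝ → ℝ)
    (hKh : ∀ v, Kh v = K ((v - v0) / h) / h) (hKb : ∀ v, Kb v = K ((v - v0) / b) / b)
    (gh : ℝ → Fin 2 → ℝ) (hgh : ∀ v i, gh v i = ((v - v0) / h) ^ (i : ℕ))
    (gb : ℝ → Fin 4 → ℝ) (hgb : ∀ v i, gb v i = ((v - v0) / b) ^ (i : ℕ))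
    -- the (invertible) design matrices D_{h,v₁⁰,1} and D_{b,v₁⁰,3}
    (Dh : Matrix (Fin 2) (Fin 2) ℝ)
    (hDh : ∀ i k, Dh i k = ∫ ω, gh (V1 ω) i * gh (V1 ω) k * Kh (V1 ω) ∂μ)
    (Db : Matrix (Fin 4) (Fin 4) ℝ)
    (hDb : ∀ i k, Db i k = ∫ ω, gb (V1 ω) i * gb (V1 ω) k * Kb (V1 ω) ∂μ)
    (hDhinv : IsUnit Dh.det) (hDbinv : IsUnit Db.det)
    -- the moments E[g K τ₁]
    (Eh : Fin 2 → ℝ) (hEh : ∀ i, Eh i = ∫ ω, gh (V1 ω) i * Kh (V1 ω) * τ1 (V1 ω) ∂μ)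
    (Eb : Fin 4 → ℝ) (hEb : ∀ i, Eb i = ∫ ω, gb (V1 ω) i * Kb (V1 ω) * τ1 (V1 ω) ∂μ)
    -- Γ_{h,b,v₁⁰}(v₁) = e₁ᵀ Dₕ⁻¹ gₕ(v₁) Kₕ(v₁) − c₂h²b⁻² e₃ᵀ D_b⁻¹ g_b(v₁) K_b(v₁)
    (Γ : ℝ → ℝ)
    (hΓ : ∀ v, Γ v = (Dh⁻¹ *ᵥ gh v) 0 * Kh v
      - c2 * h ^ 2 / b ^ 2 * ((Db⁻¹ *ᵥ gb v) 2 * Kb v))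
    -- γᶜᵃᵗᵉ_{h,b,v₁⁰}(V₁) as in Theorem 1
    (γc : ℝ → ℝ)
    (hγc : ∀ v, γc v = (Dh⁻¹ *ᵥ gh v) 0 * Kh v * (gh v ⬝ᵥ (Dh⁻¹ *ᵥ Eh))
      - c2 * h ^ 2 / b ^ 2 * ((Db⁻¹ *ᵥ gb v) 2 * Kb v * (gb v ⬝ᵥ (Db⁻¹ *ᵥ Eb))))
    -- suitable integrability
    (hint1 : Integrable (fun ω => Γ (V1 ω) * φ ω) μ)
    (hint2 : Integrable (fun ω => γc (V1 ω)) μ)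
    (hint3 : Integrable (fun ω => Γ (V1 ω) * τ1 (V1 ω)) μ)
    (hintDh : ∀ i k : Fin 2, Integrable (fun ω => gh (V1 ω) i * gh (V1 ω) k * Kh (V1 ω)) μ)
    (hintDb : ∀ i k : Fin 4, Integrable (fun ω => gb (V1 ω) i * gb (V1 ω) k * Kb (V1 ω)) μ)
    (hintEh : ∀ i : Fin 2, Integrable (fun ω => gh (V1 ω) i * Kh (V1 ω) * τ1 (V1 ω)) μ)
    (hintEb : ∀ i : Fin 4, Integrable (fun ω => gb (V1 ω) i * Kb (V1 ω) * τ1 (V1 ω)) μ) :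
    ∫ ω, Γ (V1 ω) * φ ω ∂μ = ∫ ω, γc (V1 ω) ∂μ
      ∧ ∫ ω, γc (V1 ω) ∂μ = ∫ ω, Γ (V1 ω) * τ1 (V1 ω) ∂μ := by
  have hm : MeasurableSpace.comap V1 inferInstance ≤ ‹MeasurableSpace Ω› := hV1.comap_le
  -- measurability of Γ
  have hΓmeas : Measurable Γ := by
    have : Γ = fun v => (∑ j, Dh⁻¹ 0 j * (((v - v0) / h) ^ (j : ℕ))) * (K ((v - v0) / h) / h)
        - c2 * h ^ 2 / b ^ 2 * ((∑ j, Db⁻¹ 2 j * (((v - v0) / b) ^ (j : ℕ))) * (K ((v - v0) / b) / b)) := by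
      funext v
      simp only [hΓ v, Matrix.mulVec, dotProduct, hgh, hgb, hKh, hKb]
    rw [this]
    apply Measurable.sub
    · exact (Finset.measurable_sum _ fun j _ => by fun_prop).mul (by fun_prop)
    · exact Measurable.const_mul
        ((Finset.measurable_sum _ fun j _ => by fun_prop).mul (by fun_prop)) _
  have hΓV1 : StronglyMeasurable[MeasurableSpace.comap V1 inferInstance]
      (fun ω => Γ (V1 ω)) := by
    have hV1m : Measurable[MeasurableSpace.comap V1 inferInstance] V1 :=
      Measurable.of_comap_le le_rfl
    exact (hΓmeas.comp hV1m).stronglyMeasurable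
  -- Step A : E[Γ(V1) φ] = E[Γ(V1) τ1(V1)]
  have hφint : Integrable φ μ := hφ2.integrable (by norm_num)
  have hint1' : Integrable ((fun ω => Γ (V1 ω)) * φ) μ := hint1
  have hpull : μ[(fun ω => Γ (V1 ω)) * φ | MeasurableSpace.comap V1 inferInstance]
      =ᵐ[μ] (fun ω => Γ (V1 ω)) * μ[φ | MeasurableSpace.comap V1 inferInstance] :=
    condExp_mul_of_stronglyMeasurable_left hΓV1 hint1' hφint
  have stepA : ∫ ω, Γ (V1 ω) * φ ω ∂μ = ∫ ω, Γ (V1 ω) * τ1 (V1 ω) ∂μ := by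
    have h1 : ∫ ω, Γ (V1 ω) * φ ω ∂μ
        = ∫ ω, (μ[(fun ω => Γ (V1 ω)) * φ | MeasurableSpace.comap V1 inferInstance]) ω ∂μ :=
      (integral_condExp (μ := μ) (f := (fun ω => Γ (V1 ω)) * φ) hm).symm
    rw [h1, integral_congr_ae hpull]
    refine integral_congr_ae ?_
    filter_upwards [hτ1ver] with ω hω
    simp only [Pi.mul_apply]
    rw [← hω]
  -- pointwise expansions
  have hΓτ_eq : (fun ω => Γ (V1 ω) * τ1 (V1 ω)) = fun ω =>
      (∑ j, Dh⁻¹ 0 j * (gh (V1 ω) j * Kh (V1 ω) * τ1 (V1 ω)))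
      - (∑ j, (c2 * h ^ 2 / b ^ 2 * Db⁻¹ 2 j) * (gb (V1 ω) j * Kb (V1 ω) * τ1 (V1 ω))) := by
    funext ω
    simp only [hΓ, Matrix.mulVec, dotProduct, Finset.sum_mul, Finset.mul_sum, sub_mul]
    congr 1 <;> exact Finset.sum_congr rfl fun j _ => by ring
  have hγ_eq : (fun ω => γc (V1 ω)) = fun ω =>
      (∑ p : Fin 2 × Fin 2, ((1 : ℝ) * (Dh⁻¹ 0 p.1 * (Dh⁻¹ *ᵥ Eh) p.2))
        * (gh (V1 ω) p.1 * gh (V1 ω) p.2 * Kh (V1 ω)))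
      - (∑ p : Fin 4 × Fin 4, (c2 * h ^ 2 / b ^ 2 * (Db⁻¹ 2 p.1 * (Db⁻¹ *ᵥ Eb) p.2))
        * (gb (V1 ω) p.1 * gb (V1 ω) p.2 * Kb (V1 ω))) := by
    funext ω
    rw [hγc]
    have e1 : (Dh⁻¹ *ᵥ gh (V1 ω)) 0 = ∑ j, Dh⁻¹ 0 j * gh (V1 ω) j := by
      simp [Matrix.mulVec, dotProduct]
    have e2 : gh (V1 ω) ⬝ᵥ (Dh⁻¹ *ᵥ Eh) = ∑ k, gh (V1 ω) k * (Dh⁻¹ *ᵥ Eh) k := by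
      simp [dotProduct]
    have e3 : (Db⁻¹ *ᵥ gb (V1 ω)) 2 = ∑ j, Db⁻¹ 2 j * gb (V1 ω) j := by
      simp [Matrix.mulVec, dotProduct]
    have e4 : gb (V1 ω) ⬝ᵥ (Db⁻¹ *ᵥ Eb) = ∑ k, gb (V1 ω) k * (Db⁻¹ *ᵥ Eb) k := by
      simp [dotProduct]
    rw [e1, e2, e3, e4,
      ← one_mul ((∑ j, Dh⁻¹ 0 j * gh (V1 ω) j) * Kh (V1 ω)
        * (∑ k, gh (V1 ω) k * (Dh⁻¹ *ᵥ Eh) k)),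
      expand_quadratic (fun j => Dh⁻¹ 0 j) (fun k => (Dh⁻¹ *ᵥ Eh) k) (gh (V1 ω)) (Kh (V1 ω)) 1,
      expand_quadratic (fun j => Db⁻¹ 2 j) (fun k => (Db⁻¹ *ᵥ Eb) k) (gb (V1 ω)) (Kb (V1 ω))
        (c2 * h ^ 2 / b ^ 2)]
  -- integral of Γ τ1
  have hI1 : ∫ ω, Γ (V1 ω) * τ1 (V1 ω) ∂μ
      = (Dh⁻¹ *ᵥ Eh) 0 - c2 * h ^ 2 / b ^ 2 * (Db⁻¹ *ᵥ Eb) 2 := by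
    rw [hΓτ_eq]
    rw [integral_sub
      (integrable_finset_sum _ fun j _ => (hintEh j).const_mul _)
      (integrable_finset_sum _ fun j _ => (hintEb j).const_mul _),
      integral_fintype_sum_mul' μ (fun j => Dh⁻¹ 0 j)
        (fun j ω => gh (V1 ω) j * Kh (V1 ω) * τ1 (V1 ω)) hintEh,
      integral_fintype_sum_mul' μ (fun j => c2 * h ^ 2 / b ^ 2 * Db⁻¹ 2 j)
        (fun j ω => gb (V1 ω) j * Kb (V1 ω) * τ1 (V1 ω)) hintEb]
    simp only [Matrix.mulVec, dotProduct, Finset.mul_sum]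
    congr 1
    · exact Finset.sum_congr rfl fun j _ => by rw [hEh]
    · exact Finset.sum_congr rfl fun j _ => by rw [hEb]; ring
  -- integral of γc
  have hI2 : ∫ ω, γc (V1 ω) ∂μ
      = (Dh⁻¹ *ᵥ Eh) 0 - c2 * h ^ 2 / b ^ 2 * (Db⁻¹ *ᵥ Eb) 2 := by
    rw [hγ_eq]
    rw [integral_sub
      (integrable_finset_sum _ fun p _ => (hintDh p.1 p.2).const_mul _)
      (integrable_finset_sum _ fun p _ => (hintDb p.1 p.2).const_mul _),
      integral_fintype_sum_mul' μ
        (fun p : Fin 2 × Fin 2 => (1 : ℝ) * (Dh⁻¹ 0 p.1 * (Dh⁻¹ *ᵥ Eh) p.2))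
        (fun p ω => gh (V1 ω) p.1 * gh (V1 ω) p.2 * Kh (V1 ω))
        (fun p => hintDh p.1 p.2),
      integral_fintype_sum_mul' μ
        (fun p : Fin 4 × Fin 4 => c2 * h ^ 2 / b ^ 2 * (Db⁻¹ 2 p.1 * (Db⁻¹ *ᵥ Eb) p.2))
        (fun p ω => gb (V1 ω) p.1 * gb (V1 ω) p.2 * Kb (V1 ω))
        (fun p => hintDb p.1 p.2)]
    have hDhid : Dh *ᵥ (Dh⁻¹ *ᵥ Eh) = Eh := by
      rw [Matrix.mulVec_mulVec, Matrix.mul_nonsing_inv Dh hDhinv, Matrix.one_mulVec]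
    have hDbid : Db *ᵥ (Db⁻¹ *ᵥ Eb) = Eb := by
      rw [Matrix.mulVec_mulVec, Matrix.mul_nonsing_inv Db hDbinv, Matrix.one_mulVec]
    have f1 : ∑ p : Fin 2 × Fin 2, ((1 : ℝ) * (Dh⁻¹ 0 p.1 * (Dh⁻¹ *ᵥ Eh) p.2))
        * ∫ ω, gh (V1 ω) p.1 * gh (V1 ω) p.2 * Kh (V1 ω) ∂μ
        = (Dh⁻¹ *ᵥ (Dh *ᵥ (Dh⁻¹ *ᵥ Eh))) 0 := by
      rw [Fintype.sum_prod_type]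
      simp only [Matrix.mulVec, dotProduct, Finset.mul_sum]
      refine Finset.sum_congr rfl fun j _ => Finset.sum_congr rfl fun k _ => ?_
      rw [← hDh, Finset.sum_mul]; exact Finset.sum_congr rfl fun x _ => by ring
    have f2 : ∑ p : Fin 4 × Fin 4, (c2 * h ^ 2 / b ^ 2 * (Db⁻¹ 2 p.1 * (Db⁻¹ *ᵥ Eb) p.2))
        * ∫ ω, gb (V1 ω) p.1 * gb (V1 ω) p.2 * Kb (V1 ω) ∂μ
        = c2 * h ^ 2 / b ^ 2 * (Db⁻¹ *ᵥ (Db *ᵥ (Db⁻¹ *ᵥ Eb))) 2 := by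
      rw [Fintype.sum_prod_type]
      simp only [Matrix.mulVec, dotProduct, Finset.mul_sum]
      refine Finset.sum_congr rfl fun j _ => Finset.sum_congr rfl fun k _ => ?_
      rw [← hDb, Finset.sum_mul]; exact Finset.sum_congr rfl fun x _ => by ring
    rw [f1, f2, hDhid, hDbid]
  exact ⟨by rw [stepA, hI1, hI2], by rw [hI1, hI2]⟩
end
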